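/- arXiv:math/0310286 — 3 statements merged into one kernel-verified Lean document; each statement's English description precedes it below -/
import Mathlib

section
/- For x > 0 and 1/x < u ≤ π, the sum S^{i,j}(x,u) = Σ_{n ≤ x} (x-n)^i (d/du)^j cos(nu) satisfies S^{i,j}(x,u) = O(x^i u^{-j-1}) when 0 ≤ j ≤ i, and S^{i,j}(x,u) = O(x^j u^{-i-1}) when j > i ≥ 0, where the implied constants may depend on i and j but not on x and u. -/
open MeasureTheory Real Set Filter

noncomputable section

section AuxiliaryLemmas
open Finset

def zz (u : ℝ) : ℂ := Complex.exp (u * Complex.I)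

def Complex.abs : AbsoluteValue ℂ ℝ := NormedField.toAbsoluteValue ℂ

lemma Complex.abs_exp_ofReal_mul_I (u : ℝ) : Complex.abs (Complex.exp (u * Complex.I)) = 1 :=
  Complex.norm_exp_ofReal_mul_I u

lemma Complex.sq_abs (z : ℂ) : Complex.abs z ^ 2 = Complex.normSq z := Complex.sq_norm z

lemma Complex.abs_natCast (n : ℕ) : Complex.abs (n : ℂ) = n := Complex.norm_natCast n

lemma Complex.abs_ofReal (r : ℝ) : Complex.abs (r : ℂ) = |r| := Complex.norm_real r

lemma Complex.abs_I : Complex.abs Complex.I = 1 := Complex.norm_I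

lemma Complex.abs_re_le_abs (z : ℂ) : |z.re| ≤ Complex.abs z := Complex.abs_re_le_norm z


lemma abs_zz (u : ℝ) : Complex.abs (zz u) = 1 := Complex.abs_exp_ofReal_mul_I u

lemma zz_ne_one {u : ℝ} (hu : 0 < u) (hu2 : u ≤ π) : zz u ≠ 1 := by
  intro h
  rw [zz, Complex.exp_eq_one_iff] at h
  obtain ⟨n, hn⟩ := h
  have hu' : u = n * (2 * π) := by
    have h2 := congrArg Complex.im hn
    simpa using h2
  have hπ : (0:ℝ) < π := Real.pi_pos
  rcases le_or_gt n 0 with h0 | h0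
  · have : (n : ℝ) * (2 * π) ≤ 0 := by
      apply mul_nonpos_of_nonpos_of_nonneg
      · exact_mod_cast h0
      · positivity
    linarith
  · have : (1:ℝ) ≤ n := by exact_mod_cast h0
    nlinarith

lemma abs_zz_sub_one {u : ℝ} (hu : 0 < u) (hu2 : u ≤ π) :
    2 / π * u ≤ Complex.abs (zz u - 1) := by
  have hπ : (0:ℝ) < π := Real.pi_pos
  have hre : (zz u - 1).re = Real.cos u - 1 := by
    simp [zz, Complex.sub_re, Complex.exp_ofReal_mul_I_re]
  have him : (zz u - 1).im = Real.sin u := by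
    simp [zz, Complex.sub_im, Complex.exp_ofReal_mul_I_im]
  have hsq : (Complex.abs (zz u - 1))^2 = 2 - 2 * Real.cos u := by
    rw [Complex.sq_abs, Complex.normSq_apply, hre, him]
    nlinarith [Real.sin_sq_add_cos_sq u]
  have hcos : Real.cos u ≤ 1 - 2 / π ^ 2 * u ^ 2 := by
    apply Real.cos_le_one_sub_mul_cos_sq
    rw [abs_of_pos hu]; exact hu2
  have h1 : (2 / π * u)^2 ≤ (Complex.abs (zz u - 1))^2 := by
    rw [hsq]
    have : (2/π*u)^2 = 4 / π^2 * u^2 := by field_simp; ring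
    rw [this]
    have key : 4/π^2*u^2 = 2*(2/π^2*u^2) := by ring
    linarith
  have h2 : (0:ℝ) ≤ 2 / π * u := by positivity
  nlinarith [Complex.abs.nonneg (zz u - 1)]


noncomputable def hcoef (u : ℝ) : ℕ → ℂ
  | 0 => 1 / (zz u - 1)
  | (k+1) => (zz u / (1 - zz u)) *
      ∑ l ∈ (Finset.range (k+1)).attach,
        (((k+1).choose l.1 : ℂ)) * (-1)^(k+1-l.1) * hcoef u l.1
  decreasing_by exact Finset.mem_range.mp l.2

lemma hcoef_zero (u : ℝ) : hcoef u 0 = 1 / (zz u - 1) := by rw [hcoef]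

lemma hcoef_succ (u : ℝ) (k : ℕ) : hcoef u (k+1) = (zz u / (1 - zz u)) *
    ∑ l ∈ Finset.range (k+1), (((k+1).choose l : ℂ)) * (-1)^(k+1-l) * hcoef u l := by
  rw [hcoef]
  congr 1
  exact Finset.sum_attach (Finset.range (k+1)) (fun l => (((k+1).choose l : ℂ)) * (-1)^(k+1-l) * hcoef u l)

lemma one_sub_zz_ne {u : ℝ} (hu : 0 < u) (hu2 : u ≤ π) : (1:ℂ) - zz u ≠ 0 := by
  intro h
  exact zz_ne_one hu hu2 (by linear_combination -h)

lemma hcoef_rel {u : ℝ} (hu : 0 < u) (hu2 : u ≤ π) (k : ℕ) (hk : 0 < k) :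
    zz u * ∑ l ∈ Finset.range (k+1), ((k.choose l : ℂ)) * (-1)^(k-l) * hcoef u l
      = hcoef u k := by
  obtain ⟨k', rfl⟩ : ∃ k', k = k' + 1 := ⟨k - 1, by omega⟩
  rw [Finset.sum_range_succ]
  have hdef := hcoef_succ u k'
  have hne := one_sub_zz_ne hu hu2
  set z := zz u with hz
  set S := ∑ l ∈ Finset.range (k'+1), (((k'+1).choose l : ℂ)) * (-1)^(k'+1-l) * hcoef u l with hS
  have hH : hcoef u (k'+1) * (1 - z) = z * S := by
    rw [hdef]; field_simp
  simp only [Nat.choose_self, Nat.cast_one, Nat.sub_self, pow_zero, one_mul, mul_one]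
  linear_combination -hH
lemma sum_triangle {M : Type*} [AddCommMonoid M] (m : ℕ) (f : ℕ → ℕ → M) :
    (∑ l ∈ Finset.range (m+1), ∑ s ∈ Finset.range (m+1-l), f l s)
      = ∑ k ∈ Finset.range (m+1), ∑ l ∈ Finset.range (k+1), f l (k-l) := by
  have step1 : ∀ l, l ∈ Finset.range (m+1) →
      (∑ s ∈ Finset.range (m+1-l), f l s) = ∑ k ∈ Finset.Ico l (m+1), f l (k-l) := by
    intro l _
    rw [Finset.sum_Ico_eq_sum_range]
    apply Finset.sum_congr rfl
    intro s _
    congr 1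
    omega
  rw [Finset.sum_congr rfl step1]
  simp only [Finset.range_eq_Ico]
  rw [Finset.sum_Ico_Ico_comm]

lemma key_poly {u : ℝ} (hu : 0 < u) (hu2 : u ≤ π) (m : ℕ) (y : ℂ) :
    ∑ l ∈ Finset.range (m+1), (m.choose l : ℂ) * hcoef u l * (zz u * (y-1)^(m-l) - y^(m-l))
      = y^m := by
  set z := zz u with hz
  have hpow : ∀ n : ℕ, (y - 1)^n
      = ∑ s ∈ Finset.range (n+1), (-1:ℂ)^s * (n.choose s : ℂ) * y^(n-s) := by
    intro n
    have h : y - 1 = -1 + y := by ring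
    rw [h, add_pow]
    apply Finset.sum_congr rfl
    intro s hs
    ring
  have step1 : ∑ l ∈ Finset.range (m+1), (m.choose l : ℂ) * hcoef u l * (z * (y-1)^(m-l) - y^(m-l))
      = (∑ l ∈ Finset.range (m+1), ∑ s ∈ Finset.range (m+1-l),
          (m.choose l : ℂ) * hcoef u l * z * ((-1:ℂ)^s * ((m-l).choose s : ℂ) * y^(m-l-s)))
        - ∑ l ∈ Finset.range (m+1), (m.choose l : ℂ) * hcoef u l * y^(m-l) := by
    rw [← Finset.sum_sub_distrib]
    apply Finset.sum_congr rfl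
    intro l hl
    rw [Finset.mem_range] at hl
    have h1 : m + 1 - l = (m - l) + 1 := by omega
    rw [h1, hpow (m-l), mul_sub]
    congr 1
    rw [Finset.mul_sum, Finset.mul_sum]
    apply Finset.sum_congr rfl
    intro s _
    ring
  rw [step1, sum_triangle m (fun l s => (m.choose l : ℂ) * hcoef u l * z *
      ((-1:ℂ)^s * ((m-l).choose s : ℂ) * y^(m-l-s)))]
  have step2 : ∀ k ∈ Finset.range (m+1),
      (∑ l ∈ Finset.range (k+1), (m.choose l : ℂ) * hcoef u l * z *
        ((-1:ℂ)^(k-l) * ((m-l).choose (k-l) : ℂ) * y^(m-l-(k-l))))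
      = (m.choose k : ℂ) * y^(m-k) *
          (z * ∑ l ∈ Finset.range (k+1), (k.choose l : ℂ) * (-1:ℂ)^(k-l) * hcoef u l) := by
    intro k hk
    rw [Finset.mem_range] at hk
    rw [Finset.mul_sum, Finset.mul_sum]
    apply Finset.sum_congr rfl
    intro l hl
    rw [Finset.mem_range] at hl
    have hchoose : (m.choose k : ℂ) * (k.choose l : ℂ)
        = (m.choose l : ℂ) * ((m-l).choose (k-l) : ℂ) := by
      rw [← Nat.cast_mul, ← Nat.cast_mul, Nat.choose_mul (n := m) (k := k) (s := l) (by omega)]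
    have hy : m - l - (k - l) = m - k := by omega
    rw [hy]
    linear_combination (-(hcoef u l * z * (-1:ℂ)^(k-l) * y^(m-k))) * hchoose
  rw [Finset.sum_congr rfl step2, ← Finset.sum_sub_distrib]
  have step3 : ∀ k ∈ Finset.range (m+1),
      ((m.choose k : ℂ) * y^(m-k) *
          (z * ∑ l ∈ Finset.range (k+1), (k.choose l : ℂ) * (-1:ℂ)^(k-l) * hcoef u l)
        - (m.choose k : ℂ) * hcoef u k * y^(m-k))
      = if k = 0 then y^m else 0 := by
    intro k hk
    by_cases h0 : k = 0
    · subst h0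
      rw [if_pos rfl]
      simp only [zero_add, Finset.sum_range_one, Nat.choose_self, Nat.cast_one, Nat.sub_zero, pow_zero,
        Nat.sub_self, one_mul, mul_one, Nat.choose_zero_right]
      have hne : z - 1 ≠ 0 := sub_ne_zero.mpr (zz_ne_one hu hu2)
      have h1 : (z - 1) * hcoef u 0 = 1 := by
        rw [hcoef_zero, ← hz]; field_simp
      linear_combination (y^m) * h1
    · rw [hcoef_rel hu hu2 k (Nat.pos_of_ne_zero h0), if_neg h0]
      ring
  rw [Finset.sum_congr rfl step3, Finset.sum_ite_eq' (Finset.range (m+1)) 0 (fun _ => y^m)]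
  rw [if_pos (Finset.mem_range.mpr (Nat.succ_pos m))]

noncomputable def Bpoly (u : ℝ) (m : ℕ) (y : ℂ) : ℂ :=
  ∑ l ∈ Finset.range (m+1), (m.choose l : ℂ) * hcoef u l * y^(m-l)

lemma telescope {u : ℝ} (hu : 0 < u) (hu2 : u ≤ π) (m N : ℕ) (x : ℝ) :
    ∑ n ∈ Finset.range (N+1), ((x:ℂ) - n)^m * (zz u)^n
      = (zz u)^(N+1) * Bpoly u m ((x:ℂ) - (N+1)) - Bpoly u m (x:ℂ) := by
  have key : ∀ n : ℕ, ((x:ℂ) - n)^m * (zz u)^n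
      = (zz u)^(n+1) * Bpoly u m ((x:ℂ) - (n+1)) - (zz u)^n * Bpoly u m ((x:ℂ) - n) := by
    intro n
    have hident := key_poly hu hu2 m ((x:ℂ) - n)
    have hsub : ((x:ℂ) - (n+1)) = ((x:ℂ) - n) - 1 := by push_cast; ring
    rw [hsub]
    unfold Bpoly
    rw [Finset.mul_sum, Finset.mul_sum, ← Finset.sum_sub_distrib]
    have : ∀ l ∈ Finset.range (m+1),
        (zz u)^(n+1) * ((m.choose l : ℂ) * hcoef u l * ((x:ℂ) - n - 1)^(m-l))
          - (zz u)^n * ((m.choose l : ℂ) * hcoef u l * ((x:ℂ) - n)^(m-l))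
        = (zz u)^n * ((m.choose l : ℂ) * hcoef u l *
            (zz u * (((x:ℂ) - n)-1)^(m-l) - ((x:ℂ) - n)^(m-l))) := by
      intro l _
      ring
    rw [Finset.sum_congr rfl this, ← Finset.mul_sum, hident]
    ring
  have tele := Finset.sum_range_sub (fun n => (zz u)^n * Bpoly u m ((x:ℂ) - n)) (N+1)
  push_cast at tele
  rw [Finset.sum_congr rfl (fun n _ => key n), tele]
  norm_num

lemma abs_zz_div (u : ℝ) (hu : 0 < u) (hu2 : u ≤ π) :
    Complex.abs (zz u / (1 - zz u)) ≤ π / (2 * u) := by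
  have hπ : (0:ℝ) < π := Real.pi_pos
  have h1 : Complex.abs (1 - zz u) = Complex.abs (zz u - 1) := by
    rw [show (1:ℂ) - zz u = -(zz u - 1) from by ring, AbsoluteValue.map_neg]
  have h2 := abs_zz_sub_one hu hu2
  have h3 : (0:ℝ) < 2/π*u := by positivity
  rw [map_div₀, abs_zz, h1]
  rw [div_le_div_iff₀ (by linarith) (by positivity)]
  have h4 : π * (2/π*u) ≤ π * Complex.abs (zz u - 1) :=
    mul_le_mul_of_nonneg_left h2 (le_of_lt hπ)
  have h5 : π * (2/π*u) = 2*u := by field_simp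
  linarith

lemma hcoef_bound (k : ℕ) : ∃ C : ℝ, 0 < C ∧ ∀ u : ℝ, 0 < u → u ≤ π →
    Complex.abs (hcoef u k) ≤ C / u^(k+1) := by
  induction k using Nat.strong_induction_on with
  | _ k ih =>
    match k with
    | 0 =>
      refine ⟨π, Real.pi_pos, fun u hu hu2 => ?_⟩
      rw [hcoef_zero]
      have h1 : Complex.abs (1 / (zz u - 1)) = 1 / Complex.abs (zz u - 1) := by
        rw [map_div₀, map_one]
      rw [h1, pow_one]
      have h2 := abs_zz_sub_one hu hu2
      have hπ : (0:ℝ) < π := Real.pi_pos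
      have h3 : (0:ℝ) < 2/π*u := by positivity
      rw [div_le_div_iff₀ (by linarith) hu]
      have h4 : π * (2/π*u) ≤ π * Complex.abs (zz u - 1) :=
        mul_le_mul_of_nonneg_left h2 (le_of_lt hπ)
      have h5 : π * (2/π*u) = 2*u := by field_simp
      linarith
    | (k+1) =>
      have ih' : ∀ l : ℕ, ∃ C : ℝ, 0 < C ∧ (l < k + 1 → ∀ u : ℝ, 0 < u → u ≤ π →
          Complex.abs (hcoef u l) ≤ C / u^(l+1)) := by
        intro l
        by_cases h : l < k + 1
        · obtain ⟨C, hC, hCb⟩ := ih l (by omega)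
          exact ⟨C, hC, fun _ => hCb⟩
        · exact ⟨1, one_pos, fun h' => absurd h' h⟩
      choose g hgpos hgb using ih'
      refine ⟨π/2 * ∑ l ∈ Finset.range (k+1), ((k+1).choose l) * g l * π^(k-l) + 1, ?_, ?_⟩
      · have : (0:ℝ) ≤ π/2 * ∑ l ∈ Finset.range (k+1), ((k+1).choose l) * g l * π^(k-l) := by
          apply mul_nonneg (by positivity)
          apply Finset.sum_nonneg
          intro l hl
          have := hgpos l
          have hπ : (0:ℝ) < π := Real.pi_pos
          positivity
        linarith
      · intro u hu hu2
        have hπ : (0:ℝ) < π := Real.pi_pos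
        rw [hcoef_succ]
        rw [map_mul]
        have hzd := abs_zz_div u hu hu2
        have hsum : Complex.abs (∑ l ∈ Finset.range (k+1),
            (((k+1).choose l : ℂ)) * (-1)^(k+1-l) * hcoef u l)
            ≤ ∑ l ∈ Finset.range (k+1), ((k+1).choose l : ℝ) * (g l / u^(l+1)) := by
          refine (Complex.abs.sum_le _ _).trans ?_
          apply Finset.sum_le_sum
          intro l hl
          rw [Finset.mem_range] at hl
          rw [map_mul, map_mul, map_pow, AbsoluteValue.map_neg, map_one, one_pow, mul_one,
            Complex.abs_natCast]
          exact mul_le_mul_of_nonneg_left (hgb l hl u hu hu2) (by positivity)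
        have hterm : ∀ l ∈ Finset.range (k+1),
            ((k+1).choose l : ℝ) * (g l / u^(l+1))
              ≤ (((k+1).choose l) * g l * π^(k-l)) / u^(k+1) := by
          intro l hl
          rw [Finset.mem_range] at hl
          have huk : u^(l+1) * u^(k-l) = u^(k+1) := by rw [← pow_add]; congr 1; omega
          have e1 : ((k+1).choose l : ℝ) * (g l / u^(l+1))
              = ((k+1).choose l : ℝ) * g l * u^(k-l) / u^(k+1) := by
            rw [← huk]
            field_simp
          rw [e1]
          gcongr
          all_goals first
            | exact hu2
            | exact le_of_lt hu
            | (have := (hgpos l).le; positivity)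
        calc Complex.abs (zz u / (1 - zz u)) * Complex.abs (∑ l ∈ Finset.range (k+1),
                (((k+1).choose l : ℂ)) * (-1)^(k+1-l) * hcoef u l)
            ≤ (π/(2*u)) * ∑ l ∈ Finset.range (k+1), ((k+1).choose l : ℝ) * (g l / u^(l+1)) := by
              apply mul_le_mul hzd hsum (Complex.abs.nonneg _) (by positivity)
          _ ≤ (π/(2*u)) * ∑ l ∈ Finset.range (k+1),
                (((k+1).choose l) * g l * π^(k-l)) / u^(k+1) := by
              apply mul_le_mul_of_nonneg_left _ (by positivity)
              exact Finset.sum_le_sum hterm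
          _ = (π/2 * ∑ l ∈ Finset.range (k+1), ((k+1).choose l) * g l * π^(k-l)) / u^(k+2) := by
              rw [Finset.mul_sum, Finset.mul_sum, Finset.sum_div]
              apply Finset.sum_congr rfl
              intro l _
              have hpow2 : u^(k+2) = u^(k+1) * u := by ring
              have hne : u^(k+1) ≠ 0 := by positivity
              rw [hpow2, div_mul_div_comm, div_eq_div_iff (by positivity) (by positivity)]
              ring
          _ ≤ (π/2 * ∑ l ∈ Finset.range (k+1), ((k+1).choose l) * g l * π^(k-l) + 1) / u^(k+2) := by
              apply div_le_div_of_nonneg_right ?_ (by positivity)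
              linarith

lemma Bpoly_bound (g : ℕ → ℝ) (hgpos : ∀ l, 0 < g l)
    (hg : ∀ l (u : ℝ), 0 < u → u ≤ π → Complex.abs (hcoef u l) ≤ g l / u^(l+1))
    (m : ℕ) {u : ℝ} (hu : 0 < u) (hu2 : u ≤ π) (y : ℂ) (hy : Complex.abs y ≤ 1) :
    Complex.abs (Bpoly u m y)
      ≤ (∑ l ∈ Finset.range (m+1), (m.choose l : ℝ) * g l * π^(m-l)) / u^(m+1) := by
  have hπ : (0:ℝ) < π := Real.pi_pos
  unfold Bpoly
  refine (Complex.abs.sum_le _ _).trans ?_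
  rw [Finset.sum_div]
  apply Finset.sum_le_sum
  intro l hl
  rw [Finset.mem_range] at hl
  rw [map_mul, map_mul, Complex.abs_natCast, map_pow]
  have h1 : Complex.abs y ^ (m - l) ≤ 1 := pow_le_one₀ (Complex.abs.nonneg y) hy
  have h2 : Complex.abs (hcoef u l) ≤ g l / u^(l+1) := hg l u hu hu2
  have h3 : g l / u^(l+1) ≤ g l * π^(m-l) / u^(m+1) := by
    have huk : u^(l+1) * u^(m-l) = u^(m+1) := by rw [← pow_add]; congr 1; omega
    have e1 : g l / u^(l+1) = g l * u^(m-l) / u^(m+1) := by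
      rw [← huk]; field_simp
    rw [e1]
    gcongr
    all_goals first
      | exact hu2
      | exact le_of_lt hu
      | exact (hgpos l).le
  calc (m.choose l : ℝ) * Complex.abs (hcoef u l) * Complex.abs y ^ (m-l)
      ≤ (m.choose l : ℝ) * (g l / u^(l+1)) * 1 := by
        apply mul_le_mul
        · exact mul_le_mul_of_nonneg_left h2 (by positivity)
        · exact h1
        · positivity
        · have := (hgpos l).le; positivity
    _ = (m.choose l : ℝ) * (g l / u^(l+1)) := by ring
    _ ≤ (m.choose l : ℝ) * (g l * π^(m-l) / u^(m+1)) :=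
        mul_le_mul_of_nonneg_left h3 (by positivity)
    _ = (m.choose l : ℝ) * g l * π^(m-l) / u^(m+1) := by ring

lemma inner_zero (j t : ℕ) (h : t < j) :
    ∑ k ∈ Finset.range (j+1), (-1:ℤ)^k * (j.choose k) * (k.choose t) = 0 := by
  have hsub : Finset.Ico t (j+1) ⊆ Finset.range (j+1) := by
    rw [Finset.range_eq_Ico]
    exact Finset.Ico_subset_Ico (Nat.zero_le t) le_rfl
  have hzero : ∀ k ∈ Finset.range (j+1), k ∉ Finset.Ico t (j+1) →
      (-1:ℤ)^k * (j.choose k) * (k.choose t) = 0 := by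
    intro k hk hk2
    rw [Finset.mem_range] at hk
    rw [Finset.mem_Ico] at hk2
    have : k < t := by omega
    rw [Nat.choose_eq_zero_of_lt this]
    simp
  rw [← Finset.sum_subset hsub hzero]
  rw [Finset.sum_Ico_eq_sum_range]
  have hterm : ∀ s ∈ Finset.range (j+1-t),
      (-1:ℤ)^(t+s) * (j.choose (t+s)) * ((t+s).choose t)
        = ((-1:ℤ)^t * (j.choose t)) * ((-1:ℤ)^s * ((j-t).choose s)) := by
    intro s hs
    rw [Finset.mem_range] at hs
    have hc : (j.choose (t+s)) * ((t+s).choose t) = (j.choose t) * ((j-t).choose s) := by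
      have := Nat.choose_mul (n := j) (show t ≤ t + s by omega)
      simpa using this
    have hcast : ((j.choose (t+s)) * ((t+s).choose t) : ℤ) = (j.choose t) * ((j-t).choose s) := by
      exact_mod_cast congrArg (Nat.cast : ℕ → ℤ) hc
    rw [pow_add]
    linear_combination ((-1:ℤ)^t * (-1:ℤ)^s) * hcast
  rw [Finset.sum_congr rfl hterm, ← Finset.mul_sum]
  have h2 : j + 1 - t = (j - t) + 1 := by omega
  rw [h2, Int.alternating_sum_range_choose_of_ne (by omega)]
  ring

lemma diff_kill (i j l : ℕ) (h : l < j) :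
    ∑ k ∈ Finset.range (j+1), (-1:ℤ)^k * (j.choose k) * ((i+k).choose l) = 0 := by
  have expand : ∀ k ∈ Finset.range (j+1),
      (-1:ℤ)^k * (j.choose k) * ((i+k).choose l)
        = ∑ p ∈ Finset.HasAntidiagonal.antidiagonal l,
            ((i.choose p.1 : ℤ)) * ((-1:ℤ)^k * (j.choose k) * (k.choose p.2)) := by
    intro k _
    rw [Nat.add_choose_eq]
    push_cast
    rw [Finset.mul_sum]
    apply Finset.sum_congr rfl
    intro p _
    ring
  rw [Finset.sum_congr rfl expand, Finset.sum_comm]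
  apply Finset.sum_eq_zero
  intro p hp
  rw [Finset.HasAntidiagonal.mem_antidiagonal] at hp
  rw [← Finset.mul_sum, inner_zero j p.2 (by omega), mul_zero]

lemma pow_helper {x u : ℝ} (hx : 0 < x) (hu : 0 < u) (hxu : 1 ≤ x * u) (p s t : ℕ) :
    x^p / u^(s+t) ≤ x^(p+t) / u^s := by
  rw [div_le_div_iff₀ (by positivity) (by positivity)]
  have h1 : (1:ℝ) ≤ (x*u)^t := one_le_pow₀ hxu
  calc x^p * u^s = x^p * u^s * 1 := by ring
    _ ≤ x^p * u^s * (x*u)^t := mul_le_mul_of_nonneg_left h1 (by positivity)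
    _ = x^(p+t) * u^(s+t) := by rw [mul_pow, pow_add, pow_add]; ring

lemma iter_cos (c : ℝ) : ∀ (jn : ℕ) (u : ℝ),
    iteratedDeriv jn (fun v => Real.cos (c * v)) u
      = (((c:ℂ)*Complex.I)^jn * Complex.exp ((c:ℂ)*Complex.I*(u:ℂ))).re := by
  intro jn
  induction jn with
  | zero =>
    intro u
    rw [iteratedDeriv_zero]
    have harg : (c:ℂ)*Complex.I*(u:ℂ) = ((c*u : ℝ):ℂ) * Complex.I := by push_cast; ring
    rw [pow_zero, one_mul, harg, Complex.exp_ofReal_mul_I_re]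
  | succ n ihn =>
    intro u
    rw [iteratedDeriv_succ]
    have hfun : iteratedDeriv n (fun v => Real.cos (c * v))
        = fun w : ℝ => ((((c:ℂ)*Complex.I)^n * Complex.exp ((c:ℂ)*Complex.I*(w:ℂ)))).re :=
      funext ihn
    rw [hfun]
    have h1 : HasDerivAt (fun w : ℝ => (c:ℂ)*Complex.I*(w:ℂ)) ((c:ℂ)*Complex.I) u := by
      have h0 : HasDerivAt (fun w : ℝ => ((w:ℂ))) 1 u := by
        simpa using (hasDerivAt_id u).ofReal_comp
      simpa using h0.const_mul ((c:ℂ)*Complex.I)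
    have h2 : HasDerivAt (fun w : ℝ => Complex.exp ((c:ℂ)*Complex.I*(w:ℂ)))
        (Complex.exp ((c:ℂ)*Complex.I*(u:ℂ)) * ((c:ℂ)*Complex.I)) u := h1.cexp
    have h3 : HasDerivAt (fun w : ℝ => ((c:ℂ)*Complex.I)^n * Complex.exp ((c:ℂ)*Complex.I*(w:ℂ)))
        (((c:ℂ)*Complex.I)^n * (Complex.exp ((c:ℂ)*Complex.I*(u:ℂ)) * ((c:ℂ)*Complex.I))) u :=
      h2.const_mul _
    have h4 : HasDerivAt (fun w : ℝ =>
        ((((c:ℂ)*Complex.I)^n * Complex.exp ((c:ℂ)*Complex.I*(w:ℂ)))).re)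
        ((((c:ℂ)*Complex.I)^n * (Complex.exp ((c:ℂ)*Complex.I*(u:ℂ)) * ((c:ℂ)*Complex.I))).re) u :=
      (Complex.reCLM.hasFDerivAt.comp_hasDerivAt u h3)
    rw [h4.deriv]
    congr 1
    rw [pow_succ]
    ring

end AuxiliaryLemmas

/-- `S^{i,j}(x,u) = Σ_{n ≤ x} (x-n)^i (d/du)^j cos(nu)`. -/
noncomputable def Ssum (i j : ℕ) (x u : ℝ) : ℝ :=
  ∑ n ∈ Finset.range (⌊x⌋₊ + 1),
    (x - (n:ℝ))^i * iteratedDeriv j (fun v => Real.cos ((n:ℝ) * v)) u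

/-- Lemma 5(i): for `x > 0` and `1/x < u ≤ π`,
`S^{i,j}(x,u) = O(x^i u^{-j-1})` if `j ≤ i` and `O(x^j u^{-i-1})` if `j > i`. -/
theorem stmt_0 (i j : ℕ) :
    ∃ C : ℝ, 0 < C ∧ ∀ x u : ℝ, 0 < x → 1/x < u → u ≤ π →
      (j ≤ i → |Ssum i j x u| ≤ C * x^i / u^(j+1)) ∧
      (i < j → |Ssum i j x u| ≤ C * x^j / u^(i+1)) := by
  choose g hgpos hg using hcoef_bound
  have hπ : (0:ℝ) < π := Real.pi_pos
  set G : ℕ → ℝ := fun m => ∑ l ∈ Finset.range (m+1), (m.choose l : ℝ) * g l * π^(m-l)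
    with hGdef
  have hGnn : ∀ m, 0 ≤ G m := by
    intro m
    apply Finset.sum_nonneg
    intro l _
    have := (hgpos l).le
    positivity
  set K : ℕ → ℝ := fun l => ∑ k ∈ Finset.range (j+1), (j.choose k : ℝ) * ((i+k).choose l : ℝ)
    with hKdef
  have hKnn : ∀ l, 0 ≤ K l := by
    intro l
    apply Finset.sum_nonneg
    intro k _
    positivity
  set S1 : ℝ := ∑ k ∈ Finset.range (j+1), (j.choose k : ℝ) * G (i+k) with hS1def
  set S2 : ℝ := ∑ l ∈ Finset.Ico j (i+j+1), K l * g l with hS2def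
  have hS1nn : 0 ≤ S1 := Finset.sum_nonneg fun k _ => mul_nonneg (by positivity) (hGnn _)
  have hS2nn : 0 ≤ S2 := Finset.sum_nonneg fun l _ => mul_nonneg (hKnn _) (hgpos _).le
  refine ⟨S1 + S2 + 1, by linarith, ?_⟩
  intro x u hx hxu huπ
  have hu : 0 < u := lt_trans (one_div_pos.mpr hx) hxu
  have hxu1 : 1 ≤ x * u := by
    have h1 : 1/x * x < u * x := mul_lt_mul_of_pos_right hxu hx
    rw [one_div, inv_mul_cancel₀ (ne_of_gt hx)] at h1
    nlinarith
  set N := ⌊x⌋₊ with hNdef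
  set A : ℂ := ∑ n ∈ Finset.range (N+1), ((x:ℂ) - n)^i * (n:ℂ)^j * (zz u)^n with hAdef
  -- Step 1 : Ssum as real part of complex sum
  have hS : Ssum i j x u = (Complex.I^j * A).re := by
    unfold Ssum
    rw [hAdef, Finset.mul_sum, Complex.re_sum]
    apply Finset.sum_congr rfl
    intro n _
    rw [iter_cos (n:ℝ) j u]
    have hzn : (zz u)^n = Complex.exp (((n:ℝ):ℂ)*Complex.I*(u:ℂ)) := by
      unfold zz
      rw [← Complex.exp_nat_mul]
      congr 1
      push_cast
      ring
    rw [← Complex.re_ofReal_mul]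
    congr 1
    rw [hzn]
    push_cast
    ring
  have habs : |Ssum i j x u| ≤ Complex.abs A := by
    rw [hS]
    refine (Complex.abs_re_le_abs _).trans ?_
    rw [map_mul, map_pow, Complex.abs_I, one_pow, one_mul]
  -- Step 2 : binomial expansion of n^j
  have hTn : ∀ n : ℕ, ((x:ℂ) - n)^i * (n:ℂ)^j * (zz u)^n
      = ∑ k ∈ Finset.range (j+1),
          (j.choose k : ℂ) * (-1)^k * (x:ℂ)^(j-k) * (((x:ℂ) - n)^(i+k) * (zz u)^n) := by
    intro n
    have h := add_pow (-(((x:ℂ) - n))) ((x:ℂ)) j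
    rw [show -((x:ℂ) - n) + (x:ℂ) = (n:ℂ) from by ring] at h
    rw [h, Finset.mul_sum, Finset.sum_mul]
    apply Finset.sum_congr rfl
    intro k hk
    rw [neg_pow]
    ring
  have hA1 : A = ∑ k ∈ Finset.range (j+1), (j.choose k : ℂ) * (-1)^k * (x:ℂ)^(j-k) *
      (∑ n ∈ Finset.range (N+1), ((x:ℂ) - n)^(i+k) * (zz u)^n) := by
    rw [hAdef, Finset.sum_congr rfl (fun n _ => hTn n), Finset.sum_comm]
    apply Finset.sum_congr rfl
    intro k _
    rw [Finset.mul_sum]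
  -- Step 3 : telescoping
  have hA2 : A = (∑ k ∈ Finset.range (j+1), (j.choose k : ℂ) * (-1)^k * (x:ℂ)^(j-k) *
        ((zz u)^(N+1) * Bpoly u (i+k) ((x:ℂ) - (N+1))))
      - ∑ k ∈ Finset.range (j+1), (j.choose k : ℂ) * (-1)^k * (x:ℂ)^(j-k) *
        Bpoly u (i+k) (x:ℂ) := by
    rw [hA1, ← Finset.sum_sub_distrib]
    apply Finset.sum_congr rfl
    intro k _
    rw [telescope hu huπ (i+k) N x]
    ring
  -- Step 4 : reorganize the polynomial part
  have hA2eq : (∑ k ∈ Finset.range (j+1), (j.choose k : ℂ) * (-1)^k * (x:ℂ)^(j-k) *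
        Bpoly u (i+k) (x:ℂ))
      = ∑ l ∈ Finset.Ico j (i+j+1),
          (∑ k ∈ Finset.range (j+1), (-1:ℂ)^k * (j.choose k) * ((i+k).choose l))
            * hcoef u l * (x:ℂ)^(i+j-l) := by
    have step1 : ∀ k ∈ Finset.range (j+1),
        (j.choose k : ℂ) * (-1)^k * (x:ℂ)^(j-k) * Bpoly u (i+k) (x:ℂ)
          = ∑ l ∈ Finset.range (i+j+1),
              (-1:ℂ)^k * (j.choose k) * ((i+k).choose l) * hcoef u l * (x:ℂ)^(i+j-l) := by
      intro k hk
      rw [Finset.mem_range] at hk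
      unfold Bpoly
      rw [Finset.mul_sum]
      have hvanish : ∀ l ∈ Finset.range (i+j+1), l ∉ Finset.range (i+k+1) →
          (j.choose k : ℂ) * (-1)^k * (x:ℂ)^(j-k)
            * (((i+k).choose l : ℂ) * hcoef u l * (x:ℂ)^(i+k-l)) = 0 := by
        intro l _ hl2
        rw [Finset.mem_range] at hl2
        rw [Nat.choose_eq_zero_of_lt (show i+k < l by omega)]
        push_cast
        ring
      rw [Finset.sum_subset (Finset.range_subset_range.mpr (show i+k+1 ≤ i+j+1 by omega)) hvanish]
      apply Finset.sum_congr rfl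
      intro l hl
      rw [Finset.mem_range] at hl
      by_cases hli : l ≤ i+k
      · have hpow : (x:ℂ)^(j-k) * (x:ℂ)^(i+k-l) = (x:ℂ)^(i+j-l) := by
          rw [← pow_add]
          congr 1
          omega
        linear_combination ((-1:ℂ)^k * (j.choose k:ℂ) * ((i+k).choose l:ℂ) * hcoef u l) * hpow
      · rw [Nat.choose_eq_zero_of_lt (show i+k < l by omega)]
        push_cast
        ring
    rw [Finset.sum_congr rfl step1, Finset.sum_comm]
    have step2 : ∀ l ∈ Finset.range (i+j+1),
        (∑ k ∈ Finset.range (j+1),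
          (-1:ℂ)^k * (j.choose k) * ((i+k).choose l) * hcoef u l * (x:ℂ)^(i+j-l))
        = (∑ k ∈ Finset.range (j+1), (-1:ℂ)^k * (j.choose k) * ((i+k).choose l))
            * hcoef u l * (x:ℂ)^(i+j-l) := by
      intro l _
      rw [Finset.sum_mul, Finset.sum_mul]
    rw [Finset.sum_congr rfl step2]
    symm
    apply Finset.sum_subset
    · rw [Finset.range_eq_Ico]
      exact Finset.Ico_subset_Ico (Nat.zero_le j) le_rfl
    · intro l hl hl2
      rw [Finset.mem_range] at hl
      rw [Finset.mem_Ico] at hl2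
      have hlj : l < j := by omega
      have hz : (∑ k ∈ Finset.range (j+1), (-1:ℂ)^k * (j.choose k) * ((i+k).choose l)) = 0 := by
        have hd := diff_kill i j l hlj
        have hc : ((∑ k ∈ Finset.range (j+1),
            (-1:ℤ)^k * (j.choose k) * ((i+k).choose l) : ℤ) : ℂ) = 0 := by
          rw [hd]; simp
        push_cast at hc
        exact hc
      rw [hz, zero_mul, zero_mul]
  -- boundary point bound
  have hboundary : Complex.abs ((x:ℂ) - ((N:ℂ) + 1)) ≤ 1 := by
    have h1 : (x:ℂ) - ((N:ℂ)+1) = ((x - ((N:ℝ)+1) : ℝ) : ℂ) := by push_cast; ring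
    rw [h1, Complex.abs_ofReal]
    have hN1 : (N:ℝ) ≤ x := Nat.floor_le hx.le
    have hN2 : x < N + 1 := Nat.lt_floor_add_one x
    rw [abs_le]
    constructor <;> linarith
  have habsneg : ∀ k : ℕ, Complex.abs ((-1:ℂ)^k) = 1 := by
    intro k
    rw [map_pow, AbsoluteValue.map_neg, map_one, one_pow]
  -- main bound machine
  have main : ∀ P Q : ℕ,
      (∀ k ∈ Finset.range (j+1), x^(j-k)/u^(i+k+1) ≤ x^P/u^(Q+1)) →
      (∀ l ∈ Finset.Ico j (i+j+1), x^(i+j-l)/u^(l+1) ≤ x^P/u^(Q+1)) →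
      |Ssum i j x u| ≤ (S1 + S2 + 1) * x^P / u^(Q+1) := by
    intro P Q hPk hPl
    have htri : ∀ X Y : ℂ, Complex.abs (X - Y) ≤ Complex.abs X + Complex.abs Y := by
      intro X Y
      have h := Complex.abs.add_le X (-Y)
      rwa [← sub_eq_add_neg, AbsoluteValue.map_neg] at h
    have b1 : Complex.abs (∑ k ∈ Finset.range (j+1),
          (j.choose k : ℂ) * (-1)^k * (x:ℂ)^(j-k) *
          ((zz u)^(N+1) * Bpoly u (i+k) ((x:ℂ) - ((N:ℂ)+1))))
        ≤ S1 * (x^P/u^(Q+1)) := by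
      refine (Complex.abs.sum_le _ _).trans ?_
      rw [hS1def, Finset.sum_mul]
      apply Finset.sum_le_sum
      intro k hk
      have hB : Complex.abs (Bpoly u (i+k) ((x:ℂ) - ((N:ℂ)+1))) ≤ G (i+k) / u^(i+k+1) := by
        rw [hGdef]
        exact Bpoly_bound g hgpos hg (i+k) hu huπ _ hboundary
      have hstep : Complex.abs ((j.choose k : ℂ) * (-1)^k * (x:ℂ)^(j-k) *
          ((zz u)^(N+1) * Bpoly u (i+k) ((x:ℂ) - ((N:ℂ)+1))))
          ≤ (j.choose k : ℝ) * x^(j-k) * (G (i+k) / u^(i+k+1)) := by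
        rw [map_mul, map_mul, map_mul, map_mul, habsneg k, Complex.abs_natCast, map_pow,
          Complex.abs_ofReal, abs_of_pos hx, map_pow, abs_zz, one_pow, mul_one, one_mul]
        exact mul_le_mul_of_nonneg_left hB (mul_nonneg (Nat.cast_nonneg _) (pow_nonneg hx.le _))
      refine hstep.trans ?_
      have h2 := hPk k hk
      calc (j.choose k : ℝ) * x^(j-k) * (G (i+k) / u^(i+k+1))
          = (j.choose k : ℝ) * G (i+k) * (x^(j-k)/u^(i+k+1)) := by ring
        _ ≤ (j.choose k : ℝ) * G (i+k) * (x^P/u^(Q+1)) :=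
            mul_le_mul_of_nonneg_left h2 (mul_nonneg (by positivity) (hGnn _))
    have b2 : Complex.abs (∑ l ∈ Finset.Ico j (i+j+1),
          (∑ k ∈ Finset.range (j+1), (-1:ℂ)^k * (j.choose k) * ((i+k).choose l))
            * hcoef u l * (x:ℂ)^(i+j-l))
        ≤ S2 * (x^P/u^(Q+1)) := by
      refine (Complex.abs.sum_le _ _).trans ?_
      rw [hS2def, Finset.sum_mul]
      apply Finset.sum_le_sum
      intro l hl
      have hc : Complex.abs (∑ k ∈ Finset.range (j+1),
          (-1:ℂ)^k * (j.choose k) * ((i+k).choose l)) ≤ K l := by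
        refine (Complex.abs.sum_le _ _).trans ?_
        rw [hKdef]
        apply Finset.sum_le_sum
        intro k _
        rw [map_mul, map_mul, habsneg k, Complex.abs_natCast, Complex.abs_natCast, one_mul]
      have hh : Complex.abs (hcoef u l) ≤ g l / u^(l+1) := hg l u hu huπ
      have hstep : Complex.abs ((∑ k ∈ Finset.range (j+1),
            (-1:ℂ)^k * (j.choose k) * ((i+k).choose l)) * hcoef u l * (x:ℂ)^(i+j-l))
          ≤ K l * (g l / u^(l+1)) * x^(i+j-l) := by
        rw [map_mul, map_mul, map_pow, Complex.abs_ofReal, abs_of_pos hx]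
        apply mul_le_mul _ le_rfl (pow_nonneg hx.le _) _
        · exact mul_le_mul hc hh (Complex.abs.nonneg _) (hKnn l)
        · exact mul_nonneg (hKnn l) (div_nonneg (hgpos l).le (pow_nonneg hu.le _))
      refine hstep.trans ?_
      have h2 := hPl l hl
      calc K l * (g l / u^(l+1)) * x^(i+j-l)
          = K l * g l * (x^(i+j-l)/u^(l+1)) := by ring
        _ ≤ K l * g l * (x^P/u^(Q+1)) :=
            mul_le_mul_of_nonneg_left h2 (mul_nonneg (hKnn l) (hgpos l).le)
    have hT : Complex.abs A ≤ S1 * (x^P/u^(Q+1)) + S2 * (x^P/u^(Q+1)) := by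
      rw [hA2, hA2eq]
      exact (htri _ _).trans (add_le_add b1 b2)
    have hfin : |Ssum i j x u| ≤ (S1 + S2) * (x^P/u^(Q+1)) := by
      refine habs.trans (hT.trans ?_)
      rw [add_mul]
    calc |Ssum i j x u| ≤ (S1 + S2) * (x^P/u^(Q+1)) := hfin
      _ ≤ (S1 + S2 + 1) * (x^P/u^(Q+1)) := by
          apply mul_le_mul_of_nonneg_right _ (div_nonneg (pow_nonneg hx.le _) (pow_nonneg hu.le _))
          linarith
      _ = (S1 + S2 + 1) * x^P / u^(Q+1) := by rw [mul_div_assoc]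
  constructor
  · intro hji
    apply main i j
    · intro k hk
      rw [Finset.mem_range] at hk
      have e1 : (j-k) + (i+k-j) = i := by omega
      have e2 : (j+1) + (i+k-j) = i+k+1 := by omega
      have hp := pow_helper hx hu hxu1 (j-k) (j+1) (i+k-j)
      rw [e1, e2] at hp
      exact hp
    · intro l hl
      rw [Finset.mem_Ico] at hl
      have e1 : (i+j-l) + (l-j) = i := by omega
      have e2 : (j+1) + (l-j) = l+1 := by omega
      have hp := pow_helper hx hu hxu1 (i+j-l) (j+1) (l-j)
      rw [e1, e2] at hp
      exact hp
  · intro hij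
    apply main j i
    · intro k hk
      rw [Finset.mem_range] at hk
      have e1 : (j-k) + k = j := by omega
      have e2 : (i+1) + k = i+k+1 := by omega
      have hp := pow_helper hx hu hxu1 (j-k) (i+1) k
      rw [e1, e2] at hp
      exact hp
    · intro l hl
      rw [Finset.mem_Ico] at hl
      have e1 : (i+j-l) + (l-i) = j := by omega
      have e2 : (i+1) + (l-i) = l+1 := by omega
      have hp := pow_helper hx hu hxu1 (i+j-l) (i+1) (l-i)
      rw [e1, e2] at hp
      exact hp
end
end

section
/- Let α ≥ 1, k = ⌊α⌋, and let q_α : [0,1] → ℝ satisfy the Nevanlinna kernel conditions: q_α ≥ 0; ∫_0^1 q_α = 1; q_α^{(β)} exists and is absolutely continuous on [0,1] for β = 1,...,k-1; q_α^{(β)}(1) = 0 for β = 0,...,k-1; q_α^{(k)} exists on (0,1); (-1)^k q_α^{(k)} ≥ 0 and is monotonically increasing on (0,1). Then q_α is monotonically decreasing, its derivatives of odd order less than k are negative and monotonically increasing, its derivatives of even order less than k are positive and monotonically decreasing, there is a constant A_k with |q_α^{(β)}(t)| < A_k for β = 0,1,...,k-1 and all t ∈ [0,1], and ∫_0^1 |q_α^{(k)}(t)|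 dt < A_k. -/
open MeasureTheory Real Set Filter

noncomputable section
structure NevanlinnaKernel (α : ℝ) (q : ℝ → ℝ) : Prop where
  nonneg : ∀ t ∈ Set.Icc (0:ℝ) 1, 0 ≤ q t
  unit : (∫ t in (0:ℝ)..1, q t) = 1
  smooth : ∀ β : ℕ, β < ⌊α⌋₊ → ∀ t ∈ Set.Ioo (0:ℝ) 1, DifferentiableAt ℝ (iteratedDeriv β q) t
  contDeriv : ∀ β : ℕ, β < ⌊α⌋₊ → ContinuousOn (iteratedDeriv β q) (Set.Icc 0 1)
  deriv_one : ∀ β : ℕ, β < ⌊α⌋₊ → iteratedDeriv β q 1 = 0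
  derivk_nonneg : ∀ t ∈ Set.Ioo (0:ℝ) 1, 0 ≤ (-1:ℝ)^(⌊α⌋₊) * iteratedDeriv (⌊α⌋₊) q t
  derivk_mono : MonotoneOn (fun t => (-1:ℝ)^(⌊α⌋₊) * iteratedDeriv (⌊α⌋₊) q t) (Set.Ioo 0 1)

/-- `q^k(u) = (-1)^k q_α^{(k)}(u)` with `k = ⌊α⌋`. -/
noncomputable def qkfun (α : ℝ) (q : ℝ → ℝ) : ℝ → ℝ :=
  fun u => (-1:ℝ)^(⌊α⌋₊) * iteratedDeriv (⌊α⌋₊) q u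

/-- `Q_k(t) = ∫_{1-t}^1 q^k(u) du`. -/
noncomputable def Qkfun (α : ℝ) (q : ℝ → ℝ) : ℝ → ℝ :=
  fun t => ∫ u in (1-t:ℝ)..1, qkfun α q u

/-- Condition (7): `∫_0^t Q_k(u)/u^{1+α-k} du = O(Q_k(t)/t^{α-k})`. -/
def Cond7 (α : ℝ) (q : ℝ → ℝ) : Prop :=
  ∃ C : ℝ, ∀ t ∈ Set.Ioo (0:ℝ) 1,
    (∫ u in (0:ℝ)..t, Qkfun α q u / u ^ (1 + α - (⌊α⌋₊:ℝ))) ≤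
      C * (Qkfun α q t / t ^ (α - (⌊α⌋₊:ℝ)))

/-- `(-1)^β q^{(β)}`. -/
noncomputable def gfun (q : ℝ → ℝ) (β : ℕ) : ℝ → ℝ := fun t => (-1:ℝ)^β * iteratedDeriv β q t


/-- Lemma 2: for `α ≥ 1` a Nevanlinna kernel is decreasing, its derivatives of odd
order `< k` are negative and increasing, those of even order `< k` are positive and
decreasing, all derivatives of order `< k` are uniformly bounded by some `A_k`, and
`∫_0^1 |q^{(k)}| < A_k`. -/
theorem stmt_3 (α : ℝ) (hα : 1 ≤ α) (q : ℝ → ℝ) (hq : NevanlinnaKernel α q) :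
    AntitoneOn q (Set.Icc 0 1) ∧
    (∀ β : ℕ, β < ⌊α⌋₊ → Odd β →
      (∀ t ∈ Set.Ico (0:ℝ) 1, iteratedDeriv β q t < 0) ∧
      MonotoneOn (iteratedDeriv β q) (Set.Icc 0 1)) ∧
    (∀ β : ℕ, β < ⌊α⌋₊ → Even β →
      (∀ t ∈ Set.Ico (0:ℝ) 1, 0 < iteratedDeriv β q t) ∧
      AntitoneOn (iteratedDeriv β q) (Set.Icc 0 1)) ∧
    ∃ A : ℝ, (∀ β : ℕ, β < ⌊α⌋₊ → ∀ t ∈ Set.Icc (0:ℝ) 1, |iteratedDeriv β q t| < A) ∧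
      (∫ t in (0:ℝ)..1, |iteratedDeriv (⌊α⌋₊) q t|) < A := by
  set k := ⌊α⌋₊ with hkdef
  have hk1 : 1 ≤ k := Nat.le_floor (by exact_mod_cast hα)
  set g : ℕ → ℝ → ℝ := gfun q with hg
  -- basic facts
  have hg1 : ∀ β, β < k → g β 1 = 0 := by
    intro β hβ; simp [hg, gfun, hq.deriv_one β hβ]
  have hgcont : ∀ β, β < k → ContinuousOn (g β) (Set.Icc 0 1) := by
    intro β hβ
    exact continuousOn_const.mul (hq.contDeriv β hβ)
  have hgderiv : ∀ β, β < k → ∀ t ∈ Set.Ioo (0:ℝ) 1,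
      HasDerivAt (g β) (-(g (β+1) t)) t := by
    intro β hβ t ht
    have hd := (hq.smooth β hβ t ht).hasDerivAt
    have h2 : HasDerivAt (fun s => (-1:ℝ)^β * iteratedDeriv β q s)
        ((-1:ℝ)^β * deriv (iteratedDeriv β q) t) t := hd.const_mul _
    have h3 : (-1:ℝ)^β * deriv (iteratedDeriv β q) t = -(g (β+1) t) := by
      rw [← iteratedDeriv_succ]
      simp [hg, gfun, pow_succ]
    rw [h3] at h2
    exact h2
  have hgk_nonneg : ∀ t ∈ Set.Ioo (0:ℝ) 1, 0 ≤ g k t := hq.derivk_nonneg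
  have hgk_mono : MonotoneOn (g k) (Set.Ioo 0 1) := hq.derivk_mono
  -- antitonicity from nonnegativity of next derivative
  have key_anti : ∀ β, β < k → (∀ t ∈ Set.Ioo (0:ℝ) 1, 0 ≤ g (β+1) t) →
      AntitoneOn (g β) (Set.Icc 0 1) := by
    intro β hβ hpos
    apply antitoneOn_of_deriv_nonpos (convex_Icc 0 1) (hgcont β hβ)
    · intro x hx
      rw [interior_Icc] at hx
      exact ((hgderiv β hβ x hx).differentiableAt).differentiableWithinAt
    · intro x hx
      rw [interior_Icc] at hx
      rw [(hgderiv β hβ x hx).deriv]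
      linarith [hpos x hx]
  -- nonnegativity of all g β on (0,1) by downward induction
  have sign : ∀ d : ℕ, ∀ β, β + d = k → ∀ t ∈ Set.Ioo (0:ℝ) 1, 0 ≤ g β t := by
    intro d
    induction d with
    | zero =>
      intro β hβ
      have : β = k := by omega
      subst this; exact hgk_nonneg
    | succ n ih =>
      intro β hβ t ht
      have hβk : β < k := by omega
      have hA := key_anti β hβk (ih (β+1) (by omega))
      have := hA ⟨ht.1.le, ht.2.le⟩ (by constructor <;> norm_num) ht.2.le
      rw [hg1 β hβk] at this
      linarith
  have anti : ∀ β, β < k → AntitoneOn (g β) (Set.Icc 0 1) := by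
    intro β hβ
    exact key_anti β hβ (sign (k - (β+1)) (β+1) (by omega))
  have nonneg : ∀ β, β < k → ∀ t ∈ Set.Icc (0:ℝ) 1, 0 ≤ g β t := by
    intro β hβ t ht
    have := anti β hβ ht (by constructor <;> norm_num) ht.2
    rw [hg1 β hβ] at this
    linarith
  -- FTC for β with β + 1 < k
  have ftc : ∀ β, β + 1 < k → ∀ t ∈ Set.Icc (0:ℝ) 1,
      g β t = ∫ u in t..1, g (β+1) u := by
    intro β hβ t ht
    have hc : ContinuousOn (g (β+1)) (Set.Icc t 1) :=
      (hgcont (β+1) hβ).mono (Set.Icc_subset_Icc ht.1 le_rfl)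
    have hint : IntervalIntegrable (g (β+1)) volume t 1 := by
      apply ContinuousOn.intervalIntegrable
      rwa [Set.uIcc_of_le ht.2]
    have h := intervalIntegral.integral_eq_sub_of_hasDerivAt_of_le ht.2
      ((hgcont β (by omega)).mono (Set.Icc_subset_Icc ht.1 le_rfl))
      (fun x hx => hgderiv β (by omega) x ⟨lt_of_le_of_lt ht.1 hx.1, hx.2⟩)
      hint.neg
    rw [intervalIntegral.integral_neg, hg1 β (by omega)] at h
    linarith
  -- FTC at top level on compact subintervals of (0,1)
  have ftck : ∀ s t : ℝ, s ∈ Set.Ioo (0:ℝ) 1 → t ∈ Set.Ioo (0:ℝ) 1 → s ≤ t →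
      ∫ u in s..t, g k u = g (k-1) s - g (k-1) t := by
    intro s t hs ht hst
    have hkk : k - 1 < k := by omega
    have hsub : Set.Icc s t ⊆ Set.Ioo (0:ℝ) 1 := Set.Icc_subset_Ioo hs.1 ht.2
    have hint : IntervalIntegrable (g k) volume s t := by
      apply MonotoneOn.intervalIntegrable
      rw [Set.uIcc_of_le hst]
      exact hgk_mono.mono hsub
    have hder : ∀ x ∈ Set.Ioo s t, HasDerivAt (g (k-1)) (-(g k x)) x := by
      intro x hx
      have h' := hgderiv (k-1) hkk x ⟨lt_trans hs.1 hx.1, lt_trans hx.2 ht.2⟩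
      rwa [Nat.sub_add_cancel hk1] at h'
    have h := intervalIntegral.integral_eq_sub_of_hasDerivAt_of_le hst
      ((hgcont (k-1) hkk).mono (Set.Icc_subset_Icc hs.1.le ht.2.le)) hder hint.neg
    rw [intervalIntegral.integral_neg] at h
    linarith
  -- nondegeneracy: g (k-1) cannot vanish before 1
  have nondegen : ∀ t0 ∈ Set.Ico (0:ℝ) 1, g (k-1) t0 = 0 → False := by
    intro t0 ht0 h0
    have hkk : k - 1 < k := by omega
    have hz : ∀ t ∈ Set.Icc t0 1, g (k-1) t = 0 := by
      intro t ht
      have h1 : g (k-1) t ≤ g (k-1) t0 := anti _ hkk ⟨ht0.1, ht0.2.le⟩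
        ⟨le_trans ht0.1 ht.1, ht.2⟩ ht.1
      have h2 : 0 ≤ g (k-1) t := nonneg _ hkk t ⟨le_trans ht0.1 ht.1, ht.2⟩
      rw [h0] at h1
      linarith
    have hzk : ∀ u ∈ Set.Ioo t0 1, g k u = 0 := by
      intro u hu
      by_contra hne
      have hu01 : u ∈ Set.Ioo (0:ℝ) 1 := ⟨lt_of_le_of_lt ht0.1 hu.1, hu.2⟩
      have hupos : 0 < g k u := lt_of_le_of_ne (hgk_nonneg u hu01) (Ne.symm hne)
      set t := (u+1)/2 with htdef
      have hut : u < t := by rw [htdef]; linarith [hu.2]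
      have ht01 : t ∈ Set.Ioo (0:ℝ) 1 := by
        constructor <;> (rw [htdef]; first | linarith [hu01.1] | linarith [hu.2])
      have hI := ftck u t hu01 ht01 hut.le
      rw [hz u ⟨hu.1.le, hu01.2.le⟩, hz t ⟨by rw [htdef]; linarith [hu.1], ht01.2.le⟩] at hI
      have hintk : IntervalIntegrable (g k) volume u t := by
        apply MonotoneOn.intervalIntegrable
        rw [Set.uIcc_of_le hut.le]
        exact hgk_mono.mono (Set.Icc_subset_Ioo hu01.1 ht01.2)
      have hmono := intervalIntegral.integral_mono_on hut.le
        (intervalIntegrable_const (c := g k u)) hintk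
        (fun x hx => hgk_mono hu01 ⟨lt_of_lt_of_le hu01.1 hx.1, lt_of_le_of_lt hx.2 ht01.2⟩ hx.1)
      rw [intervalIntegral.integral_const, hI] at hmono
      have : (0:ℝ) < (t - u) * g k u := mul_pos (sub_pos.mpr hut) hupos
      rw [smul_eq_mul] at hmono
      linarith
    have hzk' : ∀ u ∈ Set.Ioo (0:ℝ) 1, g k u = 0 := by
      intro u hu
      rcases lt_or_ge t0 u with h | h
      · exact hzk u ⟨h, hu.2⟩
      · have hw : (t0+1)/2 ∈ Set.Ioo t0 1 := ⟨by linarith [ht0.2], by linarith [ht0.2]⟩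
        have hw01 : (t0+1)/2 ∈ Set.Ioo (0:ℝ) 1 := ⟨lt_of_le_of_lt ht0.1 hw.1, hw.2⟩
        have h1 : g k u ≤ g k ((t0+1)/2) := hgk_mono hu hw01 (le_trans h (by linarith [hw.1]))
        have h2 := hgk_nonneg u hu
        rw [hzk _ hw] at h1
        linarith
    -- hence g (k-1) vanishes identically on [0,1]
    have hmon : MonotoneOn (g (k-1)) (Set.Icc 0 1) := by
      apply monotoneOn_of_deriv_nonneg (convex_Icc 0 1) (hgcont _ hkk)
      · intro x hx
        rw [interior_Icc] at hx
        have h' := hgderiv (k-1) hkk x hx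
        exact h'.differentiableAt.differentiableWithinAt
      · intro x hx
        rw [interior_Icc] at hx
        have h' := hgderiv (k-1) hkk x hx
        rw [Nat.sub_add_cancel hk1] at h'
        rw [h'.deriv, hzk' x hx]
        norm_num
    have hz1 : ∀ t ∈ Set.Icc (0:ℝ) 1, g (k-1) t = 0 := by
      intro t ht
      have h1 := hmon ht (by constructor <;> norm_num) ht.2
      rw [hg1 _ hkk] at h1
      have h2 := nonneg _ hkk t ht
      linarith
    -- all lower derivatives vanish
    have hall : ∀ d : ℕ, ∀ β, β + d = k - 1 → ∀ t ∈ Set.Icc (0:ℝ) 1, g β t = 0 := by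
      intro d
      induction d with
      | zero =>
        intro β hβ
        have : β = k - 1 := by omega
        subst this; exact hz1
      | succ n ih =>
        intro β hβ t ht
        rw [ftc β (by omega) t ht]
        rw [intervalIntegral.integral_congr (g := fun _ => (0:ℝ))
          (fun u hu => by
            rw [Set.uIcc_of_le ht.2] at hu
            exact ih (β+1) (by omega) u ⟨le_trans ht.1 hu.1, hu.2⟩)]
        simp
    have hq0 : ∀ t ∈ Set.Icc (0:ℝ) 1, q t = 0 := by
      intro t ht
      have := hall (k-1) 0 (by omega) t ht
      simpa [hg, gfun] using this
    have hzero : (∫ t in (0:ℝ)..1, q t) = 0 := by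
      rw [intervalIntegral.integral_congr (g := fun _ => (0:ℝ))
        (fun u hu => hq0 u (by rwa [Set.uIcc_of_le zero_le_one] at hu))]
      simp
    rw [hq.unit] at hzero
    exact one_ne_zero hzero
  -- strict positivity on [0,1)
  have spos : ∀ d : ℕ, ∀ β, β + d = k - 1 → ∀ t ∈ Set.Ico (0:ℝ) 1, 0 < g β t := by
    intro d
    induction d with
    | zero =>
      intro β hβ t ht
      have hβ' : β = k - 1 := by omega
      subst hβ'
      rcases (nonneg (k-1) (by omega) t ⟨ht.1, ht.2.le⟩).lt_or_eq with h | h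
      · exact h
      · exact absurd h.symm (fun hh => nondegen t ht hh)
    | succ n ih =>
      intro β hβ t ht
      have hβk : β + 1 < k := by omega
      rw [ftc β hβk t ⟨ht.1, ht.2.le⟩]
      apply intervalIntegral.intervalIntegral_pos_of_pos_on
      · apply ContinuousOn.intervalIntegrable
        rw [Set.uIcc_of_le ht.2.le]
        exact (hgcont (β+1) hβk).mono (Set.Icc_subset_Icc ht.1 le_rfl)
      · intro x hx
        exact ih (β+1) (by omega) x ⟨le_trans ht.1 hx.1.le, hx.2⟩
      · exact ht.2
  have sposall : ∀ β, β < k → ∀ t ∈ Set.Ico (0:ℝ) 1, 0 < g β t := by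
    intro β hβ
    exact spos (k-1-β) β (by omega)
  -- absolute value identity
  have habs : ∀ β, β < k → ∀ t ∈ Set.Icc (0:ℝ) 1, |iteratedDeriv β q t| = g β t := by
    intro β hβ t ht
    rw [← abs_of_nonneg (nonneg β hβ t ht)]
    simp [hg, gfun, abs_mul]
  refine ⟨?_, ?_, ?_, ?_⟩
  · -- q antitone
    have h := anti 0 (by omega)
    have he : g 0 = q := by funext t; simp [hg, gfun]
    rwa [he] at h
  · -- odd derivatives
    intro β hβ hodd
    have hneg : (-1:ℝ)^β = -1 := Odd.neg_one_pow hodd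
    constructor
    · intro t ht
      have := sposall β hβ t ht
      simp only [hg, gfun, hneg] at this
      linarith
    · intro a ha b hb hab
      have h2 := anti β hβ ha hb hab
      simp only [hg, gfun, hneg] at h2
      linarith
  · -- even derivatives
    intro β hβ heven
    have hpos : (-1:ℝ)^β = 1 := Even.neg_one_pow heven
    constructor
    · intro t ht
      have := sposall β hβ t ht
      simp only [hg, gfun, hpos, one_mul] at this
      exact this
    · intro a ha b hb hab
      have h2 := anti β hβ ha hb hab
      simp only [hg, gfun, hpos, one_mul] at h2
      exact h2
  · -- bounds
    have hkk : k - 1 < k := by omega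
    have hne : (Finset.range k).Nonempty := Finset.nonempty_range_iff.mpr (by omega)
    set B : ℝ := (Finset.range k).sup' hne (fun β => g β 0) with hBdef
    have hB : ∀ β, β < k → ∀ t ∈ Set.Icc (0:ℝ) 1, |iteratedDeriv β q t| ≤ B := by
      intro β hβ t ht
      rw [habs β hβ t ht]
      calc g β t ≤ g β 0 := anti β hβ (by constructor <;> norm_num) ht ht.1
        _ ≤ B := by rw [hBdef]; exact Finset.le_sup' (fun β => g β 0) (Finset.mem_range.mpr hβ)
    have hB0 : 0 ≤ B := by
      rw [hBdef]
      exact le_trans (nonneg 0 (by omega) 0 ⟨le_rfl, zero_le_one⟩)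
        (Finset.le_sup' (fun β => g β 0) (Finset.mem_range.mpr (show 0 < k by omega)))
    have hN0 : 0 ≤ g (k-1) 0 := nonneg _ hkk 0 (by constructor <;> norm_num)
    refine ⟨B + g (k-1) 0 + 1, fun β hβ t ht => lt_of_le_of_lt (hB β hβ t ht) (by linarith), ?_⟩
    by_cases hint : IntervalIntegrable (fun t => |iteratedDeriv k q t|) volume 0 1
    · -- the integral equals g (k-1) 0
      have haes : AEStronglyMeasurable (g k) (volume.restrict (Set.Ioc (0:ℝ) 1)) := by
        rw [← Measure.restrict_congr_set Ioo_ae_eq_Ioc]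
        exact (aemeasurable_restrict_of_monotoneOn measurableSet_Ioo hgk_mono).aestronglyMeasurable
      have hfin : HasFiniteIntegral (g k) (volume.restrict (Set.Ioc (0:ℝ) 1)) := by
        have h1 := ((intervalIntegrable_iff_integrableOn_Ioc_of_le zero_le_one).mp hint).2
        apply h1.mono'
        filter_upwards with x
        simp [hg, gfun, abs_mul]
      have hgkInt : IntervalIntegrable (g k) volume 0 1 :=
        (intervalIntegrable_iff_integrableOn_Ioc_of_le zero_le_one).mpr ⟨haes, hfin⟩
      have hder : ∀ x ∈ Set.Ioo (0:ℝ) 1, HasDerivAt (g (k-1)) (-(g k x)) x := by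
        intro x hx
        have h' := hgderiv (k-1) hkk x hx
        rwa [Nat.sub_add_cancel hk1] at h'
      have hFTC := intervalIntegral.integral_eq_sub_of_hasDerivAt_of_le zero_le_one
        (hgcont (k-1) hkk) hder hgkInt.neg
      rw [intervalIntegral.integral_neg, hg1 _ hkk] at hFTC
      have hvalg : (∫ u in (0:ℝ)..1, g k u) = g (k-1) 0 := by linarith
      have hcongr : (∫ t in (0:ℝ)..1, |iteratedDeriv k q t|) = ∫ u in (0:ℝ)..1, g k u := by
        apply intervalIntegral.integral_congr_ae
        have hone : ∀ᵐ x : ℝ, x ≠ (1:ℝ) := by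
          rw [ae_iff]
          have : {x : ℝ | ¬x ≠ 1} = {1} := by ext x; simp
          rw [this]
          exact Real.volume_singleton
        filter_upwards [hone] with x hx hxI
        rw [Set.uIoc_of_le zero_le_one] at hxI
        have hx01 : x ∈ Set.Ioo (0:ℝ) 1 := ⟨hxI.1, lt_of_le_of_ne hxI.2 hx⟩
        rw [← abs_of_nonneg (hgk_nonneg x hx01)]
        simp [hg, gfun, abs_mul]
      rw [hcongr, hvalg]
      linarith
    · rw [intervalIntegral.integral_undef hint]
      linarith
end
end

section
/- Let α ≥ 1, k = ⌊α⌋, and let q_α be a Nevanlinna kernel of order α. Then for each r = 0, 1, ..., k-1, the sums Σ_{n ≤ w} (-1)^n n^r q_α(n/w) are uniformly bounded in w > 1. -/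
open MeasureTheory Real Set Filter

noncomputable section
namespace Stmt7Aux

open Finset

/-- discrete (backward-signed) difference operator -/
noncomputable def dd : (ℕ → ℝ) →ₗ[ℝ] (ℕ → ℝ) where
  toFun f := fun n => f n - f (n+1)
  map_add' f g := by funext n; simp; ring
  map_smul' c f := by funext n; simp [smul_eq_mul]; ring

lemma dd_apply (f : ℕ → ℝ) (n : ℕ) : dd f n = f n - f (n+1) := rfl

lemma ddpow_succ (m : ℕ) (f : ℕ → ℝ) : (dd ^ (m+1)) f = (dd ^ m) (dd f) := by
  rw [pow_succ]; rfl

lemma ddpow_succ' (m : ℕ) (f : ℕ → ℝ) : (dd ^ (m+1)) f = dd ((dd ^ m) f) := by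
  rw [pow_succ']; rfl

lemma ddpow_zero (f : ℕ → ℝ) : (dd ^ 0) f = f := rfl

lemma abel_step (f : ℕ → ℝ) (N : ℕ) :
    ∑ n ∈ range (N+1), (-1:ℝ)^n * f n
      = (f 0 + (-1)^N * f N)/2 + (1/2) * ∑ n ∈ range N, (-1:ℝ)^n * (dd f n) := by
  have h1 : ∑ n ∈ range N, (-1:ℝ)^n * f n
      = (∑ n ∈ range (N+1), (-1:ℝ)^n * f n) - (-1)^N * f N := by
    rw [Finset.sum_range_succ]; ring
  have h2 : ∑ n ∈ range N, (-1:ℝ)^n * f (n+1)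
      = f 0 - ∑ n ∈ range (N+1), (-1:ℝ)^n * f n := by
    have h := Finset.sum_range_succ' (fun n => (-1:ℝ)^n * f n) N
    have h3 : ∑ i ∈ range N, (-1:ℝ)^(i+1) * f (i+1)
        = - ∑ i ∈ range N, (-1:ℝ)^i * f (i+1) := by
      rw [← Finset.sum_neg_distrib]
      exact Finset.sum_congr rfl (fun i _ => by ring)
    simp only [h3, pow_zero, one_mul] at h
    linarith
  have h4 : ∑ n ∈ range N, (-1:ℝ)^n * (dd f n)
      = (∑ n ∈ range N, (-1:ℝ)^n * f n) - ∑ n ∈ range N, (-1:ℝ)^n * f (n+1) := by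
    rw [← Finset.sum_sub_distrib]
    exact Finset.sum_congr rfl (fun n _ => by rw [dd_apply]; ring)
  rw [h4, h1, h2]; ring

lemma ddpow_bound (m : ℕ) (f : ℕ → ℝ) (n : ℕ) (B : ℝ)
    (hB : ∀ l, l ≤ m → |f (n+l)| ≤ B) : |(dd ^ m) f n| ≤ 2^m * B := by
  induction m generalizing f n with
  | zero => simpa using hB 0 le_rfl
  | succ m ih =>
    rw [ddpow_succ']
    have e : dd ((dd ^ m) f) n = (dd ^ m) f n - (dd ^ m) f (n+1) := rfl
    rw [e]
    have b1 : |(dd ^ m) f n| ≤ 2^m * B :=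
      ih f n (fun l hl => hB l (le_trans hl (Nat.le_succ m)))
    have b2 : |(dd ^ m) f (n+1)| ≤ 2^m * B := by
      apply ih f (n+1)
      intro l hl
      have : n + 1 + l = n + (l+1) := by omega
      rw [this]
      exact hB (l+1) (by omega)
    calc |(dd ^ m) f n - (dd ^ m) f (n+1)| ≤ |(dd ^ m) f n| + |(dd ^ m) f (n+1)| := abs_sub _ _
    _ ≤ 2^m * B + 2^m * B := add_le_add b1 b2
    _ = 2^(m+1) * B := by ring


lemma ddpow_shift (m : ℕ) (g : ℕ → ℝ) (n : ℕ) :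
    (dd ^ m) (fun x => g (x+1)) n = (dd ^ m) g (n+1) := by
  induction m generalizing g n with
  | zero => rfl
  | succ m ih =>
    rw [ddpow_succ, ddpow_succ]
    have : dd (fun x => g (x+1)) = fun x => (dd g) (x+1) := by funext x; rfl
    rw [this, ih]

lemma dd_mul (p g : ℕ → ℝ) :
    dd (fun n => p n * g n) = fun n => p n * dd g n + dd p n * g (n+1) := by
  funext n; simp only [dd_apply]; ring

lemma leibniz (m : ℕ) (p g : ℕ → ℝ) (n : ℕ) :
    (dd ^ m) (fun x => p x * g x) n
      = ∑ i ∈ range (m+1), (m.choose i : ℝ) * ((dd ^ i) p n * (dd ^ (m - i)) g (n+i)) := by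
  induction m generalizing p g n with
  | zero => simp
  | succ m ih =>
    rw [ddpow_succ, dd_mul]
    have hadd : (dd ^ m) (fun x => p x * dd g x + dd p x * g (x+1)) n
        = (dd ^ m) (fun x => p x * dd g x) n + (dd ^ m) (fun x => dd p x * g (x+1)) n := by
      have := map_add (dd ^ m) (fun x => p x * dd g x) (fun x => dd p x * g (x+1))
      calc (dd ^ m) (fun x => p x * dd g x + dd p x * g (x+1)) n
          = ((dd ^ m) ((fun x => p x * dd g x) + (fun x => dd p x * g (x+1)))) n := rfl
        _ = _ := by rw [this]; rfl
    rw [hadd, ih p (dd g) n, ih (dd p) (fun x => g (x+1)) n]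
    -- rewrite the two sums
    have T1 : ∑ i ∈ range (m+1), (m.choose i : ℝ) * ((dd ^ i) p n * (dd ^ (m - i)) (dd g) (n+i))
        = ∑ i ∈ range (m+1), (m.choose i : ℝ) * ((dd ^ i) p n * (dd ^ (m+1-i)) g (n+i)) := by
      refine Finset.sum_congr rfl (fun i hi => ?_)
      have hi' : i ≤ m := by simpa [Nat.lt_succ_iff] using hi
      have : m + 1 - i = (m - i) + 1 := by omega
      rw [this, ddpow_succ]
    have T2 : ∑ i ∈ range (m+1), (m.choose i : ℝ) * ((dd ^ i) (dd p) n * (dd ^ (m - i)) (fun x => g (x+1)) (n+i))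
        = ∑ i ∈ range (m+1), (m.choose i : ℝ) * ((dd ^ (i+1)) p n * (dd ^ (m-i)) g (n+(i+1))) := by
      refine Finset.sum_congr rfl (fun i hi => ?_)
      rw [ddpow_shift, ← ddpow_succ]
      have : n + i + 1 = n + (i+1) := by omega
      rw [this]
    rw [T1, T2]
    -- now the Pascal recombination
    set A : ℕ → ℝ := fun i => (dd ^ i) p n * (dd ^ (m+1-i)) g (n+i) with hA
    have e2 : ∀ i ∈ range (m+1), (m.choose i : ℝ) * ((dd ^ (i+1)) p n * (dd ^ (m-i)) g (n+(i+1)))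
        = (m.choose i : ℝ) * A (i+1) := by
      intro i hi
      have hi' : i ≤ m := by simpa [Nat.lt_succ_iff] using hi
      have : m + 1 - (i+1) = m - i := by omega
      rw [hA]; simp only [this]
    rw [Finset.sum_congr rfl e2]
    have ext : ∑ i ∈ range (m+2), (m.choose i : ℝ) * A i
        = ∑ i ∈ range (m+1), (m.choose i : ℝ) * A i := by
      rw [Finset.sum_range_succ, Nat.choose_succ_self]; simp
    have ext' : ∑ i ∈ range (m+2), (m.choose i : ℝ) * A i
        = (∑ i ∈ range (m+1), (m.choose (i+1) : ℝ) * A (i+1)) + A 0 := by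
      rw [Finset.sum_range_succ' (fun i => (m.choose i : ℝ) * A i) (m+1)]
      simp
    have key : ∑ i ∈ range (m+2), ((m+1).choose i : ℝ) * A i
        = (∑ i ∈ range (m+1), (m.choose i : ℝ) * A (i+1)) + ∑ i ∈ range (m+1), (m.choose i : ℝ) * A i := by
      rw [Finset.sum_range_succ' (fun i => ((m+1).choose i : ℝ) * A i) (m+1)]
      have : ∀ i ∈ range (m+1), ((m+1).choose (i+1) : ℝ) * A (i+1)
          = (m.choose i : ℝ) * A (i+1) + (m.choose (i+1) : ℝ) * A (i+1) := by
        intro i _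
        rw [Nat.choose_succ_succ]
        push_cast
        ring
      rw [Finset.sum_congr rfl this, Finset.sum_add_distrib]
      have : (∑ i ∈ range (m+1), (m.choose (i+1) : ℝ) * A (i+1)) + ((m+1).choose 0 : ℝ) * A 0
          = ∑ i ∈ range (m+1), (m.choose i : ℝ) * A i := by
        rw [← ext, ext']; simp
      linarith [this]
    rw [key]
    ring

lemma ddpow_choose (i j : ℕ) (n : ℕ) :
    (dd ^ i) (fun n : ℕ => (n.choose j : ℝ)) n
      = (-1:ℝ)^i * (if i ≤ j then ((n.choose (j - i) : ℕ) : ℝ) else 0) := by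
  induction i generalizing j n with
  | zero => simp
  | succ i ih =>
    rw [ddpow_succ]
    cases j with
    | zero =>
      have : dd (fun n : ℕ => ((n.choose 0 : ℕ) : ℝ)) = 0 := by
        funext n; simp [dd_apply]
      rw [this, map_zero]
      simp
    | succ j =>
      have : dd (fun n : ℕ => ((n.choose (j+1) : ℕ) : ℝ)) = fun n : ℕ => -((n.choose j : ℕ) : ℝ) := by
        funext n
        rw [dd_apply, Nat.choose_succ_succ']
        push_cast
        ring
      rw [this]
      have hneg : (dd ^ i) (fun n : ℕ => -((n.choose j : ℕ) : ℝ)) n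
          = -((dd ^ i) (fun n : ℕ => ((n.choose j : ℕ) : ℝ)) n) := by
        have := map_neg (dd ^ i) (fun n : ℕ => ((n.choose j : ℕ) : ℝ))
        calc (dd ^ i) (fun n : ℕ => -((n.choose j : ℕ) : ℝ)) n
            = ((dd ^ i) (-(fun n : ℕ => ((n.choose j : ℕ) : ℝ)))) n := rfl
          _ = _ := by rw [this]; rfl
      rw [hneg, ih j n]
      simp only [Nat.add_le_add_iff_right, Nat.succ_sub_succ]
      ring

lemma ddpow_finsum (m : ℕ) (s : Finset ℕ) (c : ℕ → ℝ) (G : ℕ → ℕ → ℝ) (n : ℕ) :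
    (dd ^ m) (fun x => ∑ j ∈ s, c j * G j x) n = ∑ j ∈ s, c j * (dd ^ m) (G j) n := by
  have e : (fun x => ∑ j ∈ s, c j * G j x) = ∑ j ∈ s, c j • (G j) := by
    funext x
    rw [Finset.sum_apply]
    exact Finset.sum_congr rfl (fun j _ => rfl)
  rw [e, map_sum]
  rw [Finset.sum_apply]
  refine Finset.sum_congr rfl (fun j _ => ?_)
  rw [_root_.map_smul]
  rfl

lemma exists_choose_basis (r : ℕ) :
    ∃ a : ℕ → ℝ, ∀ n : ℕ, ((n:ℝ))^r = ∑ j ∈ range (r+1), a j * ((n.choose j : ℕ) : ℝ) := by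
  induction r with
  | zero => exact ⟨fun _ => 1, fun n => by simp⟩
  | succ r ih =>
    obtain ⟨a, ha⟩ := ih
    set b : ℕ → ℝ := fun j => (if j ≤ r then a j * j else 0) + a (j-1) * j with hb
    refine ⟨b, fun n => ?_⟩
    have key : ∀ j : ℕ, (n:ℝ) * ((n.choose j : ℕ) : ℝ)
        = ((j:ℝ)+1) * ((n.choose (j+1) : ℕ) : ℝ) + (j:ℝ) * ((n.choose j : ℕ) : ℝ) := by
      intro j
      have h1 : (n+1) * n.choose j = (n+1).choose (j+1) * (j+1) := Nat.add_one_mul_choose_eq n j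
      have h2 : (n+1).choose (j+1) = n.choose j + n.choose (j+1) := Nat.choose_succ_succ n j
      have h3 : (n+1) * n.choose j = (n.choose j + n.choose (j+1)) * (j+1) := by rw [h1, h2]
      have hr : ((n:ℝ)+1) * ((n.choose j : ℕ):ℝ) = (((n.choose j : ℕ):ℝ) + ((n.choose (j+1) : ℕ):ℝ)) * ((j:ℝ)+1) := by
        exact_mod_cast congrArg (fun x : ℕ => (x:ℝ)) h3
      nlinarith [hr]
    have lhs : ((n:ℝ))^(r+1) = ∑ j ∈ range (r+1), (a j * (j:ℝ)) * ((n.choose j : ℕ):ℝ)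
        + ∑ j ∈ range (r+1), (a j * ((j:ℝ)+1)) * ((n.choose (j+1) : ℕ):ℝ) := by
      have e1 : ((n:ℝ))^(r+1) = (n:ℝ) * (n:ℝ)^r := by ring
      rw [e1, ha, Finset.mul_sum, ← Finset.sum_add_distrib]
      refine Finset.sum_congr rfl (fun j _ => ?_)
      rw [show (n:ℝ) * (a j * ((n.choose j : ℕ):ℝ)) = a j * ((n:ℝ) * ((n.choose j : ℕ):ℝ)) by ring, key j]
      ring
    rw [lhs]
    -- compute the b-sum
    rw [Finset.sum_range_succ' (fun j => b j * ((n.choose j : ℕ):ℝ)) (r+1)]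
    have hb0 : b 0 * ((n.choose 0 : ℕ):ℝ) = 0 := by simp [hb]
    rw [hb0, add_zero]
    have expand : ∀ i ∈ range (r+1), b (i+1) * ((n.choose (i+1) : ℕ):ℝ)
        = (if i+1 ≤ r then a (i+1) * (((i:ℝ))+1+1-1) else 0) * ((n.choose (i+1) : ℕ):ℝ)
          + (a i * ((i:ℝ)+1)) * ((n.choose (i+1) : ℕ):ℝ) := by
      intro i _
      rw [hb]
      simp only [Nat.add_sub_cancel]
      push_cast
      split_ifs <;> ring
    rw [Finset.sum_congr rfl expand, Finset.sum_add_distrib]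
    have part1 : ∑ i ∈ range (r+1), (if i+1 ≤ r then a (i+1) * (((i:ℝ))+1+1-1) else 0) * ((n.choose (i+1) : ℕ):ℝ)
        = ∑ j ∈ range (r+1), (a j * (j:ℝ)) * ((n.choose j : ℕ):ℝ) := by
      rw [Finset.sum_range_succ (fun i => (if i+1 ≤ r then a (i+1) * (((i:ℝ))+1+1-1) else 0) * ((n.choose (i+1) : ℕ):ℝ)) r]
      rw [if_neg (by omega), zero_mul, add_zero]
      rw [Finset.sum_range_succ' (fun j => (a j * (j:ℝ)) * ((n.choose j : ℕ):ℝ)) r]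
      have : ∀ i ∈ range r, (if i+1 ≤ r then a (i+1) * (((i:ℝ))+1+1-1) else 0) * ((n.choose (i+1) : ℕ):ℝ)
          = (a (i+1) * (((i+1:ℕ):ℝ))) * ((n.choose (i+1) : ℕ):ℝ) := by
        intro i hi
        rw [if_pos (by have := Finset.mem_range.mp hi; omega)]
        push_cast
        ring
      rw [Finset.sum_congr rfl this]
      simp
    rw [part1]


lemma pascal_sum (m : ℕ) (A : ℕ → ℝ) :
    ∑ i ∈ range (m+2), ((m+1).choose i : ℝ) * A i
      = (∑ i ∈ range (m+1), (m.choose i : ℝ) * A (i+1)) + ∑ i ∈ range (m+1), (m.choose i : ℝ) * A i := by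
  have ext : ∑ i ∈ range (m+2), (m.choose i : ℝ) * A i
      = ∑ i ∈ range (m+1), (m.choose i : ℝ) * A i := by
    rw [Finset.sum_range_succ, Nat.choose_succ_self]; simp
  have ext' : ∑ i ∈ range (m+2), (m.choose i : ℝ) * A i
      = (∑ i ∈ range (m+1), (m.choose (i+1) : ℝ) * A (i+1)) + A 0 := by
    rw [Finset.sum_range_succ' (fun i => (m.choose i : ℝ) * A i) (m+1)]
    simp
  rw [Finset.sum_range_succ' (fun i => ((m+1).choose i : ℝ) * A i) (m+1)]
  have : ∀ i ∈ range (m+1), ((m+1).choose (i+1) : ℝ) * A (i+1)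
      = (m.choose i : ℝ) * A (i+1) + (m.choose (i+1) : ℝ) * A (i+1) := by
    intro i _
    rw [Nat.choose_succ_succ]
    push_cast
    ring
  rw [Finset.sum_congr rfl this, Finset.sum_add_distrib]
  have : (∑ i ∈ range (m+1), (m.choose (i+1) : ℝ) * A (i+1)) + ((m+1).choose 0 : ℝ) * A 0
      = ∑ i ∈ range (m+1), (m.choose i : ℝ) * A i := by
    rw [← ext, ext']; simp
  linarith [this]

def fdo (h : ℝ) (g : ℝ → ℝ) : ℝ → ℝ := fun t => g t - g (t + h)

noncomputable def Dif (h : ℝ) (i : ℕ) (g : ℝ → ℝ) : ℝ → ℝ := (fdo h)^[i] g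

lemma Dif_zero (h : ℝ) (g : ℝ → ℝ) : Dif h 0 g = g := rfl

lemma Dif_succ_inner (h : ℝ) (i : ℕ) (g : ℝ → ℝ) : Dif h (i+1) g = Dif h i (fdo h g) :=
  Function.iterate_succ_apply (fdo h) i g

lemma Dif_succ_outer (h : ℝ) (i : ℕ) (g : ℝ → ℝ) : Dif h (i+1) g = fdo h (Dif h i g) :=
  Function.iterate_succ_apply' (fdo h) i g

lemma Dif_eq_sum (h : ℝ) (i : ℕ) (g : ℝ → ℝ) (t : ℝ) :
    Dif h i g t = ∑ l ∈ range (i+1), ((i.choose l : ℝ) * ((-1:ℝ)^l * g (t + l*h))) := by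
  induction i generalizing g with
  | zero => simp [Dif]
  | succ i ih =>
    rw [Dif_succ_inner, ih]
    have expand : ∀ l ∈ range (i+1), (i.choose l : ℝ) * ((-1:ℝ)^l * (fdo h g) (t + l*h))
        = (i.choose l : ℝ) * ((-1:ℝ)^l * g (t + l*h)) + (i.choose l : ℝ) * ((-1:ℝ)^(l+1) * g (t + (l+1)*h)) := by
      intro l _
      have e : t + l*h + h = t + ((l:ℝ)+1)*h := by ring
      simp only [fdo, e]
      push_cast
      ring
    rw [Finset.sum_congr rfl expand, Finset.sum_add_distrib]
    have := pascal_sum i (fun l => (-1:ℝ)^l * g (t + l*h))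
    push_cast at this ⊢
    linarith [this]

lemma mvt_dif (a b h : ℝ) (hh : 0 < h) :
    ∀ (i : ℕ) (g : ℝ → ℝ),
      (∀ j, j ≤ i → ContinuousOn (deriv^[j] g) (Icc a b)) →
      (∀ j, j ≤ i → ∀ t ∈ Ioo a b, DifferentiableAt ℝ (deriv^[j] g) t) →
      ∀ x, a ≤ x → x + ((i:ℝ)+1)*h ≤ b →
      ∃ ξ ∈ Ioo x (x + ((i:ℝ)+1)*h), Dif h (i+1) g x = (-h)^(i+1) * deriv^[i+1] g ξ := by
  intro i
  induction i with
  | zero =>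
    intro g hc hd x hax hxb
    have hxb' : x + h ≤ b := by push_cast at hxb; linarith
    have hlt : x < x + h := by linarith
    obtain ⟨ξ, hξI, hξ⟩ := exists_deriv_eq_slope g hlt
      ((hc 0 le_rfl).mono (Icc_subset_Icc hax hxb'))
      (fun t ht => (hd 0 le_rfl t ⟨lt_of_le_of_lt hax ht.1, lt_of_lt_of_le ht.2 hxb'⟩).differentiableWithinAt)
    have hD : Dif h 1 g x = g x - g (x + h) := rfl
    have he : x + h - x = h := by ring
    rw [he] at hξ
    have hmul : h * deriv g ξ = g (x+h) - g x := by
      rw [hξ]; field_simp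
    refine ⟨ξ, by simpa using hξI, ?_⟩
    rw [hD]
    have egoal : (-h)^(0+1) * deriv^[0+1] g ξ = -(h * deriv g ξ) := by
      simp only [zero_add, pow_one, Function.iterate_one]
      ring
    rw [egoal]
    linarith [hmul]
  | succ i ih =>
    intro g hc hd x hax hxb
    push_cast at hxb ⊢
    have hxb2 : x + h + ((i:ℝ)+1)*h ≤ b := by linarith
    set Φ : ℝ → ℝ := fun t => Dif h (i+1) g t with hΦ
    have hmem : ∀ t ∈ Icc x (x+h), ∀ l ∈ range (i+2), t + (l:ℝ)*h ∈ Icc a b := by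
      intro t ht l hl
      have hl' : (l:ℝ) ≤ (i:ℝ)+1 := by
        have : l ≤ i+1 := by simpa [Nat.lt_succ_iff] using hl
        exact_mod_cast this
      constructor
      · have : (0:ℝ) ≤ (l:ℝ)*h := mul_nonneg (by positivity) hh.le
        linarith [ht.1]
      · nlinarith [ht.2, hh.le]
    have hmemo : ∀ t ∈ Ioo x (x+h), ∀ l ∈ range (i+2), t + (l:ℝ)*h ∈ Ioo a b := by
      intro t ht l hl
      have hl' : (l:ℝ) ≤ (i:ℝ)+1 := by
        have : l ≤ i+1 := by simpa [Nat.lt_succ_iff] using hl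
        exact_mod_cast this
      constructor
      · have : (0:ℝ) ≤ (l:ℝ)*h := mul_nonneg (by positivity) hh.le
        have := ht.1
        linarith [lt_of_le_of_lt hax ht.1]
      · nlinarith [ht.2, hh.le]
    have hΦc : ContinuousOn Φ (Icc x (x+h)) := by
      apply ContinuousOn.congr (f := fun t => ∑ l ∈ range (i+2), ((i+1).choose l : ℝ) * ((-1:ℝ)^l * g (t + l*h)))
      · apply continuousOn_finset_sum
        intro l hl
        apply ContinuousOn.mul continuousOn_const
        apply ContinuousOn.mul continuousOn_const
        apply ContinuousOn.comp (hc 0 (Nat.zero_le _))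
        · exact (continuous_id.add continuous_const).continuousOn
        · intro t ht
          exact hmem t ht l hl
      · intro t _
        exact Dif_eq_sum h (i+1) g t
    have hΦd : ∀ t ∈ Ioo x (x+h), HasDerivAt Φ (Dif h (i+1) (deriv g) t) t := by
      intro t ht
      have hsum : HasDerivAt (fun y => ∑ l ∈ range (i+2), ((i+1).choose l : ℝ) * ((-1:ℝ)^l * g (y + l*h)))
          (∑ l ∈ range (i+2), ((i+1).choose l : ℝ) * ((-1:ℝ)^l * deriv g (t + l*h))) t := by
        apply HasDerivAt.fun_sum
        intro l hl
        have hdd : DifferentiableAt ℝ g (t + (l:ℝ)*h) := hd 0 (Nat.zero_le _) _ (hmemo t ht l hl)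
        have h1 : HasDerivAt (fun y : ℝ => g (y + (l:ℝ)*h)) (deriv g (t + (l:ℝ)*h)) t :=
          HasDerivAt.comp_add_const t _ hdd.hasDerivAt
        exact (h1.const_mul ((-1:ℝ)^l)).const_mul (((i+1).choose l : ℝ))
      have e : Φ = fun y => ∑ l ∈ range (i+2), ((i+1).choose l : ℝ) * ((-1:ℝ)^l * g (y + l*h)) := by
        funext y
        exact Dif_eq_sum h (i+1) g y
      rw [e]
      convert hsum using 1
      rw [Dif_eq_sum]
    have hlt : x < x + h := by linarith
    obtain ⟨η, hηI, hη⟩ := exists_deriv_eq_slope Φ hlt hΦc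
      (fun t ht => ((hΦd t ht).differentiableAt).differentiableWithinAt)
    have hηd : deriv Φ η = Dif h (i+1) (deriv g) η := (hΦd η hηI).deriv
    have he : x + h - x = h := by ring
    rw [he, hηd] at hη
    have hstep : Dif h (i+2) g x = -h * Dif h (i+1) (deriv g) η := by
      have : Dif h (i+2) g x = Φ x - Φ (x+h) := by
        rw [hΦ]
        exact congrFun (Dif_succ_outer h (i+1) g) x
      rw [this]
      have hmul : h * Dif h (i+1) (deriv g) η = Φ (x+h) - Φ x := by
        rw [hη]; field_simp
      linarith [hmul]
    -- apply IH to deriv g at η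
    have hc' : ∀ j, j ≤ i → ContinuousOn (deriv^[j] (deriv g)) (Icc a b) := by
      intro j hj
      rw [← Function.iterate_succ_apply deriv j g]
      exact hc (j+1) (by omega)
    have hd' : ∀ j, j ≤ i → ∀ t ∈ Ioo a b, DifferentiableAt ℝ (deriv^[j] (deriv g)) t := by
      intro j hj
      rw [← Function.iterate_succ_apply deriv j g]
      exact hd (j+1) (by omega)
    have hηa : a ≤ η := le_of_lt (lt_of_le_of_lt hax hηI.1)
    have hηb : η + ((i:ℝ)+1)*h ≤ b := by
      have := hηI.2
      linarith
    obtain ⟨ξ, hξI, hξ⟩ := ih (deriv g) hc' hd' η hηa hηb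
    refine ⟨ξ, ⟨lt_trans hηI.1 hξI.1, ?_⟩, ?_⟩
    · have := hξI.2
      have := hηI.2
      linarith
    · rw [hstep, hξ, ← Function.iterate_succ_apply deriv (i+1) g]
      ring


-- ### bridge
lemma bridge (h : ℝ) (Q : ℝ → ℝ) (m n : ℕ) :
    (dd ^ m) (fun x : ℕ => Q ((x:ℝ) * h)) n = Dif h m Q ((n:ℝ) * h) := by
  induction m generalizing Q with
  | zero => rfl
  | succ m ih =>
    rw [ddpow_succ, Dif_succ_inner]
    have e : dd (fun x : ℕ => Q ((x:ℝ) * h)) = fun x : ℕ => (fdo h Q) ((x:ℝ)*h) := by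
      funext x
      have e2 : (((x+1:ℕ)):ℝ)*h = (x:ℝ)*h + h := by push_cast; ring
      show Q ((x:ℝ)*h) - Q (((x+1:ℕ):ℝ)*h) = Q ((x:ℝ)*h) - Q ((x:ℝ)*h + h)
      rw [e2]
    rw [e, ih (fdo h Q)]

-- ### kernel data
structure KD (k : ℕ) (q : ℝ → ℝ) (Mk : ℝ) : Prop where
  hk1 : 1 ≤ k
  hq0 : ∀ t ∈ Icc (0:ℝ) 1, 0 ≤ q t
  hc : ∀ j, j < k → ContinuousOn (deriv^[j] q) (Icc 0 1)
  hd : ∀ j, j < k → ∀ t ∈ Ioo (0:ℝ) 1, DifferentiableAt ℝ (deriv^[j] q) t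
  h1 : ∀ j, j < k → deriv^[j] q 1 = 0
  hks : ∀ t ∈ Ioo (0:ℝ) 1, 0 ≤ (-1:ℝ)^k * deriv^[k] q t
  hMk0 : 0 ≤ Mk
  hMk : ∀ s ∈ Icc (0:ℝ) 1, |deriv^[k-1] q s| ≤ Mk

/-- decay of derivatives near 1 : `0 ≤ (-1)^i q^(i)(s) ≤ (1-s)^(k-1-i) Mk`. -/
lemma decay {k : ℕ} {q : ℝ → ℝ} {Mk : ℝ} (H : KD k q Mk) :
    ∀ (d i : ℕ), i + d = k - 1 → ∀ s ∈ Icc (0:ℝ) 1,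
      0 ≤ (-1:ℝ)^i * deriv^[i] q s ∧ (-1:ℝ)^i * deriv^[i] q s ≤ (1-s)^d * Mk := by
  intro d
  induction d with
  | zero =>
    intro i hi s hs
    have hk1 := H.hk1
    have hik : i < k := by omega
    constructor
    · -- sign via MVT with k-th derivative
      rcases eq_or_lt_of_le hs.2 with h1 | h1
      · rw [h1, H.h1 i hik]; simp
      · set F : ℝ → ℝ := fun t => (-1:ℝ)^i * deriv^[i] q t with hF
        have hdF : ∀ t ∈ Ioo s 1, DifferentiableAt ℝ F t := by
          intro t ht
          exact (H.hd i hik t ⟨lt_of_le_of_lt hs.1 ht.1, ht.2⟩).const_mul _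
        obtain ⟨ξ, hξI, hξ⟩ := exists_deriv_eq_slope F h1
          ((continuousOn_const.mul (H.hc i hik)).mono (Icc_subset_Icc hs.1 le_rfl))
          (fun t ht => (hdF t ht).differentiableWithinAt)
        have hξ01 : ξ ∈ Ioo (0:ℝ) 1 := ⟨lt_of_le_of_lt hs.1 hξI.1, hξI.2⟩
        have hder : deriv F ξ = (-1:ℝ)^i * deriv^[i+1] q ξ := by
          rw [hF]
          rw [Function.iterate_succ_apply' deriv i q]
          exact deriv_const_mul _ (H.hd i hik ξ hξ01)
        have hF1 : F 1 = 0 := by simp only [hF]; rw [H.h1 i hik]; ring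
        have hik' : i + 1 = k := by omega
        have hneg : deriv F ξ ≤ 0 := by
          rw [hder]
          have := H.hks ξ hξ01
          have e : (-1:ℝ)^i * deriv^[i+1] q ξ = -((-1:ℝ)^(i+1) * deriv^[i+1] q ξ) := by ring
          rw [e, hik']
          linarith
        rw [hξ, hF1] at hneg
        have h1s : (0:ℝ) < 1 - s := by linarith
        have h3 := mul_le_mul_of_nonneg_right hneg (le_of_lt h1s)
        rw [div_mul_cancel₀ _ (ne_of_gt h1s), zero_mul] at h3
        have hFe : F s = (-1:ℝ)^i * deriv^[i] q s := rfl
        linarith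
    · have := H.hMk s hs
      have e : |(-1:ℝ)^i * deriv^[i] q s| = |deriv^[i] q s| := by
        rw [abs_mul, abs_pow, abs_neg, abs_one, one_pow, one_mul]
      have hik' : i = k - 1 := by omega
      calc (-1:ℝ)^i * deriv^[i] q s ≤ |(-1:ℝ)^i * deriv^[i] q s| := le_abs_self _
        _ = |deriv^[i] q s| := e
        _ ≤ Mk := by rw [hik']; exact H.hMk s hs
        _ = (1-s)^0 * Mk := by ring
  | succ d ihd =>
    intro i hi s hs
    have hk1 := H.hk1
    have hik : i < k := by omega
    have hi1 : (i+1) + d = k - 1 := by omega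
    rcases eq_or_lt_of_le hs.2 with h1 | h1
    · rw [h1, H.h1 i hik]
      constructor
      · simp
      · norm_num
    · set F : ℝ → ℝ := fun t => (-1:ℝ)^i * deriv^[i] q t with hF
      have hdF : ∀ t ∈ Ioo s 1, DifferentiableAt ℝ F t := by
        intro t ht
        exact (H.hd i hik t ⟨lt_of_le_of_lt hs.1 ht.1, ht.2⟩).const_mul _
      obtain ⟨ξ, hξI, hξ⟩ := exists_deriv_eq_slope F h1
        ((continuousOn_const.mul (H.hc i hik)).mono (Icc_subset_Icc hs.1 le_rfl))
        (fun t ht => (hdF t ht).differentiableWithinAt)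
      have hξ01 : ξ ∈ Ioo (0:ℝ) 1 := ⟨lt_of_le_of_lt hs.1 hξI.1, hξI.2⟩
      have hder : deriv F ξ = (-1:ℝ)^i * deriv^[i+1] q ξ := by
        rw [hF]
        rw [Function.iterate_succ_apply' deriv i q]
        exact deriv_const_mul _ (H.hd i hik ξ hξ01)
      have hF1 : F 1 = 0 := by simp only [hF]; rw [H.h1 i hik]; ring
      have hFs : F s = (1-s) * ((-1:ℝ)^(i+1) * deriv^[i+1] q ξ) := by
        have h1s : (0:ℝ) < 1 - s := by linarith
        have hmm : deriv F ξ * (1 - s) = F 1 - F s := by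
          rw [hξ]
          field_simp
        rw [hder, hF1] at hmm
        have e : (-1:ℝ)^i * deriv^[i+1] q ξ = -((-1:ℝ)^(i+1) * deriv^[i+1] q ξ) := by ring
        rw [e] at hmm
        linarith
      obtain ⟨hlo, hhi⟩ := ihd (i+1) hi1 ξ ⟨le_of_lt hξ01.1, le_of_lt hξ01.2⟩
      have hFe : F s = (-1:ℝ)^i * deriv^[i] q s := rfl
      rw [← hFe, hFs]
      constructor
      · have h1s : (0:ℝ) ≤ 1 - s := by linarith
        exact mul_nonneg h1s hlo
      · have h1s : (0:ℝ) ≤ 1 - s := by linarith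
        have h1ξ : (0:ℝ) ≤ 1 - ξ := by linarith [hξ01.2]
        have hmono : (1-ξ)^d ≤ (1-s)^d := by
          apply pow_le_pow_left₀ h1ξ
          linarith [hξI.1]
        calc (1-s) * ((-1:ℝ)^(i+1) * deriv^[i+1] q ξ) ≤ (1-s) * ((1-ξ)^d * Mk) := by
              apply mul_le_mul_of_nonneg_left hhi h1s
          _ ≤ (1-s) * ((1-s)^d * Mk) := by
              apply mul_le_mul_of_nonneg_left _ h1s
              exact mul_le_mul_of_nonneg_right hmono H.hMk0
          _ = (1-s)^(d+1) * Mk := by ring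



lemma sign_dif {k : ℕ} {q : ℝ → ℝ} {Mk : ℝ} (H : KD k q Mk) (h : ℝ) (hh : 0 < h) :
    ∀ i, i ≤ k → ∀ x : ℝ, 0 ≤ x → x + (i:ℝ)*h ≤ 1 → 0 ≤ Dif h i q x := by
  intro i hik x hx hxb
  cases i with
  | zero =>
    have : x ≤ 1 := by
      have : x + ((0:ℕ):ℝ)*h = x := by push_cast; ring
      linarith [hxb, this.symm.trans_le hxb]
    exact H.hq0 x ⟨hx, this⟩
  | succ j =>
    have hjk : j + 1 ≤ k := hik
    have hc' : ∀ l, l ≤ j → ContinuousOn (deriv^[l] q) (Icc 0 1) := by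
      intro l hl; exact H.hc l (by omega)
    have hd' : ∀ l, l ≤ j → ∀ t ∈ Ioo (0:ℝ) 1, DifferentiableAt ℝ (deriv^[l] q) t := by
      intro l hl; exact H.hd l (by omega)
    have hxb' : x + ((j:ℝ)+1)*h ≤ 1 := by push_cast at hxb; linarith
    obtain ⟨ξ, hξI, hξ⟩ := mvt_dif 0 1 h hh j q hc' hd' x hx hxb'
    rw [hξ]
    have hξ01 : ξ ∈ Ioo (0:ℝ) 1 :=
      ⟨lt_of_le_of_lt hx hξI.1, lt_of_lt_of_le hξI.2 hxb'⟩
    have e : (-h)^(j+1) * deriv^[j+1] q ξ = h^(j+1) * ((-1:ℝ)^(j+1) * deriv^[j+1] q ξ) := by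
      ring
    rw [e]
    apply mul_nonneg (pow_nonneg hh.le _)
    by_cases hjk' : j + 1 = k
    · rw [hjk']; exact H.hks ξ hξ01
    · have hk1 := H.hk1
      exact (decay H (k-1-(j+1)) (j+1) (by omega) ξ ⟨le_of_lt hξ01.1, le_of_lt hξ01.2⟩).1

lemma mag_dif {k : ℕ} {q : ℝ → ℝ} {Mk : ℝ} (H : KD k q Mk) (h : ℝ) (hh : 0 < h) :
    ∀ i, i ≤ k - 1 → ∀ x : ℝ, 0 ≤ x → x + (i:ℝ)*h ≤ 1 →
      |Dif h i q x| ≤ h^i * (1-x)^(k-1-i) * Mk := by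
  intro i hik x hx hxb
  have hk1 := H.hk1
  cases i with
  | zero =>
    have hx1 : x ≤ 1 := by
      have e : x + ((0:ℕ):ℝ)*h = x := by push_cast; ring
      linarith [e.symm.trans_le hxb]
    obtain ⟨hlo, hhi⟩ := decay H (k-1) 0 (by omega) x ⟨hx, hx1⟩
    simp only [pow_zero, one_mul, Function.iterate_zero_apply] at hlo hhi
    have e : Dif h 0 q x = q x := rfl
    rw [e, abs_of_nonneg hlo]
    calc q x ≤ (1-x)^(k-1) * Mk := hhi
      _ = h^0 * (1-x)^(k-1-0) * Mk := by norm_num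
  | succ j =>
    have hjk : j + 1 ≤ k - 1 := hik
    have hc' : ∀ l, l ≤ j → ContinuousOn (deriv^[l] q) (Icc 0 1) := by
      intro l hl; exact H.hc l (by omega)
    have hd' : ∀ l, l ≤ j → ∀ t ∈ Ioo (0:ℝ) 1, DifferentiableAt ℝ (deriv^[l] q) t := by
      intro l hl; exact H.hd l (by omega)
    have hxb' : x + ((j:ℝ)+1)*h ≤ 1 := by push_cast at hxb; linarith
    obtain ⟨ξ, hξI, hξ⟩ := mvt_dif 0 1 h hh j q hc' hd' x hx hxb'
    rw [hξ]
    have hξ01 : ξ ∈ Ioo (0:ℝ) 1 :=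
      ⟨lt_of_le_of_lt hx hξI.1, lt_of_lt_of_le hξI.2 hxb'⟩
    obtain ⟨hlo, hhi⟩ := decay H (k-1-(j+1)) (j+1) (by omega) ξ ⟨le_of_lt hξ01.1, le_of_lt hξ01.2⟩
    have habs : |deriv^[j+1] q ξ| ≤ (1-ξ)^(k-1-(j+1)) * Mk := by
      have e : |deriv^[j+1] q ξ| = |(-1:ℝ)^(j+1) * deriv^[j+1] q ξ| := by
        rw [abs_mul, abs_pow, abs_neg, abs_one, one_pow, one_mul]
      rw [e, abs_of_nonneg hlo]
      exact hhi
    have e2 : |(-h)^(j+1) * deriv^[j+1] q ξ| = h^(j+1) * |deriv^[j+1] q ξ| := by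
      rw [abs_mul, abs_pow, abs_neg, abs_of_nonneg hh.le]
    rw [e2]
    have hmono : (1-ξ)^(k-1-(j+1)) ≤ (1-x)^(k-1-(j+1)) := by
      apply pow_le_pow_left₀ (by linarith [hξ01.2]) (by linarith [hξI.1])
    calc h^(j+1) * |deriv^[j+1] q ξ| ≤ h^(j+1) * ((1-ξ)^(k-1-(j+1)) * Mk) := by
          apply mul_le_mul_of_nonneg_left habs (by positivity)
      _ ≤ h^(j+1) * ((1-x)^(k-1-(j+1)) * Mk) := by
          apply mul_le_mul_of_nonneg_left _ (by positivity)
          exact mul_le_mul_of_nonneg_right hmono H.hMk0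
      _ = h^(j+1) * (1-x)^(k-1-(j+1)) * Mk := by ring


lemma B2 {k : ℕ} {q : ℝ → ℝ} {Mk : ℝ} (H : KD k q Mk) (j m : ℕ) (hj : j ≤ k-1) (hm : m ≤ k-1)
    (w : ℝ) (hw : 1 < w) (hmN : m ≤ ⌊w⌋₊) :
    |(dd ^ m) (fun n : ℕ => ((n.choose j : ℕ) : ℝ) * q ((n:ℝ) * (1/w))) (⌊w⌋₊ - m)|
      ≤ 2^k * ((k:ℝ)+1)^k * Mk := by
  have hk1 := H.hk1
  have hw0 : (0:ℝ) < w := by linarith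
  have hh : (0:ℝ) < 1/w := by positivity
  set N := ⌊w⌋₊ with hN
  set n0 := N - m with hn0
  have hNw : ((N:ℕ):ℝ) ≤ w := Nat.floor_le hw0.le
  have hwN : w < ((N:ℕ):ℝ) + 1 := Nat.lt_floor_add_one w
  rw [leibniz m (fun n : ℕ => ((n.choose j : ℕ):ℝ)) (fun n : ℕ => q ((n:ℝ)*(1/w))) n0]
  have hterm : ∀ i ∈ Finset.range (m+1),
      |(m.choose i : ℝ) * ((dd ^ i) (fun n : ℕ => ((n.choose j : ℕ):ℝ)) n0
          * (dd ^ (m-i)) (fun n : ℕ => q ((n:ℝ)*(1/w))) (n0+i))|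
        ≤ (m.choose i : ℝ) * (((k:ℝ)+1)^k * Mk) := by
    intro i hi
    have hi' : i ≤ m := by
      have := Finset.mem_range.mp hi; omega
    rw [ddpow_choose]
    by_cases hij : i ≤ j
    · rw [if_pos hij]
      rw [bridge (1/w) q (m-i) (n0+i)]
      set x : ℝ := ((n0+i:ℕ):ℝ) * (1/w) with hx
      have hx0 : (0:ℝ) ≤ x := by positivity
      have hsum : (n0 + i) + (m - i) = N := by omega
      have hcast : ((n0+i:ℕ):ℝ) + ((m-i:ℕ):ℝ) = ((N:ℕ):ℝ) := by
        exact_mod_cast congrArg (fun z : ℕ => (z:ℝ)) hsum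
      have hxb : x + ((m-i:ℕ):ℝ)*(1/w) ≤ 1 := by
        have e1 : x + ((m-i:ℕ):ℝ)*(1/w) = (((n0+i:ℕ):ℝ) + ((m-i:ℕ):ℝ))*(1/w) := by
          rw [hx]; ring
        rw [e1, hcast, mul_one_div]
        exact (div_le_one hw0).mpr hNw
      have hx1 : x ≤ 1 := by
        have : (0:ℝ) ≤ ((m-i:ℕ):ℝ)*(1/w) := by positivity
        linarith
      have hmag := mag_dif H (1/w) hh (m-i) (by omega) x hx0 hxb
      -- bound pieces
      have hCn : ((n0.choose (j-i) : ℕ):ℝ) ≤ w^(j-i) := by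
        have h1 : n0.choose (j-i) ≤ n0^(j-i) := Nat.choose_le_pow n0 (j-i)
        have h2 : ((n0^(j-i) : ℕ):ℝ) ≤ w^(j-i) := by
          push_cast
          apply pow_le_pow_left₀ (by positivity)
          calc ((n0:ℕ):ℝ) ≤ ((N:ℕ):ℝ) := by exact_mod_cast Nat.sub_le N m
            _ ≤ w := hNw
        calc ((n0.choose (j-i) : ℕ):ℝ) ≤ ((n0^(j-i) : ℕ):ℝ) := by exact_mod_cast h1
          _ ≤ w^(j-i) := h2
      have h1x : 1 - x ≤ ((k:ℝ)+1)*(1/w) := by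
        have hge : ((N:ℕ):ℝ) - (m:ℝ) ≤ ((n0+i:ℕ):ℝ) := by
          have : ((n0:ℕ):ℝ) = ((N:ℕ):ℝ) - (m:ℝ) := by
            rw [hn0]
            push_cast [Nat.cast_sub hmN]
            ring
          have h2 : ((n0:ℕ):ℝ) ≤ ((n0+i:ℕ):ℝ) := by exact_mod_cast Nat.le_add_right n0 i
          linarith
        have hmk : (m:ℝ) ≤ (k:ℝ) - 1 := by
          have : m ≤ k - 1 := hm
          have := hk1
          exact_mod_cast (by omega : (m:ℤ) ≤ (k:ℤ) - 1)
        have e1 : 1 - x = (w - ((n0+i:ℕ):ℝ))*(1/w) := by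
          rw [hx]
          field_simp
        rw [e1]
        apply mul_le_mul_of_nonneg_right _ hh.le
        linarith
      have h1x0 : (0:ℝ) ≤ 1 - x := by linarith
      have hD : |Dif (1/w) (m-i) q x| ≤ (1/w)^(m-i) * (((k:ℝ)+1)*(1/w))^(k-1-(m-i)) * Mk := by
        calc |Dif (1/w) (m-i) q x| ≤ (1/w)^(m-i) * (1-x)^(k-1-(m-i)) * Mk := hmag
          _ ≤ (1/w)^(m-i) * (((k:ℝ)+1)*(1/w))^(k-1-(m-i)) * Mk := by
            apply mul_le_mul_of_nonneg_right _ H.hMk0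
            apply mul_le_mul_of_nonneg_left _ (by positivity)
            exact pow_le_pow_left₀ h1x0 h1x _
      have hDfin : ((n0.choose (j-i) : ℕ):ℝ) * |Dif (1/w) (m-i) q x| ≤ ((k:ℝ)+1)^k * Mk := by
        have e2 : (1/w)^(m-i) * (((k:ℝ)+1)*(1/w))^(k-1-(m-i)) * Mk
            = ((k:ℝ)+1)^(k-1-(m-i)) * Mk * (1/w)^((m-i)+(k-1-(m-i))) := by
          rw [mul_pow, pow_add]
          ring
        have e3 : (m-i)+(k-1-(m-i)) = k-1 := by omega
        rw [e3] at e2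
        calc ((n0.choose (j-i) : ℕ):ℝ) * |Dif (1/w) (m-i) q x|
            ≤ w^(j-i) * ((1/w)^(m-i) * (((k:ℝ)+1)*(1/w))^(k-1-(m-i)) * Mk) := by
              apply mul_le_mul hCn hD (abs_nonneg _) (by positivity)
          _ = ((k:ℝ)+1)^(k-1-(m-i)) * Mk * (w^(j-i) * (1/w)^(k-1)) := by
              rw [e2]; ring
          _ ≤ ((k:ℝ)+1)^k * Mk * 1 := by
              apply mul_le_mul
              · apply mul_le_mul_of_nonneg_right _ H.hMk0
                apply pow_le_pow_right₀ (by norm_num) (by omega)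
              · have e4 : w^(j-i) * (1/w)^(k-1) = w^(j-i)/w^(k-1) := by
                  rw [one_div_pow, mul_one_div]
                rw [e4]
                apply (div_le_one (by positivity)).mpr
                apply pow_le_pow_right₀ hw.le (by omega)
              · positivity
              · exact mul_nonneg (by positivity) H.hMk0
          _ = ((k:ℝ)+1)^k * Mk := by ring
      calc |(m.choose i : ℝ) * ((-1:ℝ)^i * ((n0.choose (j-i) : ℕ):ℝ) * Dif (1/w) (m-i) q x)|
          = (m.choose i : ℝ) * (((n0.choose (j-i) : ℕ):ℝ) * |Dif (1/w) (m-i) q x|) := by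
            rw [abs_mul, abs_mul, abs_mul, abs_pow, abs_neg, abs_one, one_pow, one_mul,
              Nat.abs_cast, Nat.abs_cast]
        _ ≤ (m.choose i : ℝ) * (((k:ℝ)+1)^k * Mk) := by
            apply mul_le_mul_of_nonneg_left hDfin (by positivity)
    · rw [if_neg hij]
      have : (m.choose i : ℝ) * ((-1:ℝ)^i * 0 * (dd ^ (m-i)) (fun n : ℕ => q ((n:ℝ)*(1/w))) (n0+i)) = 0 := by
        ring
      rw [this, abs_zero]
      exact mul_nonneg (by positivity) (mul_nonneg (by positivity) H.hMk0)
  calc |∑ i ∈ Finset.range (m+1), (m.choose i : ℝ) * ((dd ^ i) (fun n : ℕ => ((n.choose j : ℕ):ℝ)) n0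
          * (dd ^ (m-i)) (fun n : ℕ => q ((n:ℝ)*(1/w))) (n0+i))|
      ≤ ∑ i ∈ Finset.range (m+1), |(m.choose i : ℝ) * ((dd ^ i) (fun n : ℕ => ((n.choose j : ℕ):ℝ)) n0
          * (dd ^ (m-i)) (fun n : ℕ => q ((n:ℝ)*(1/w))) (n0+i))| := Finset.abs_sum_le_sum_abs _ _
    _ ≤ ∑ i ∈ Finset.range (m+1), (m.choose i : ℝ) * (((k:ℝ)+1)^k * Mk) :=
        Finset.sum_le_sum hterm
    _ = (∑ i ∈ Finset.range (m+1), (m.choose i : ℝ)) * (((k:ℝ)+1)^k * Mk) := by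
        rw [← Finset.sum_mul]
    _ = (2^m : ℝ) * (((k:ℝ)+1)^k * Mk) := by
        have := Nat.sum_range_choose m
        have e : (∑ i ∈ Finset.range (m+1), (m.choose i : ℝ)) = ((2^m : ℕ):ℝ) := by
          rw [← Nat.cast_sum]
          exact_mod_cast congrArg (fun z : ℕ => (z:ℝ)) this
        rw [e]
        push_cast
        ring
    _ ≤ 2^k * (((k:ℝ)+1)^k * Mk) := by
        apply mul_le_mul_of_nonneg_right _ (mul_nonneg (by positivity) H.hMk0)
        apply pow_le_pow_right₀ (by norm_num) (by omega)
    _ = 2^k * ((k:ℝ)+1)^k * Mk := by ring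

lemma B3 {k : ℕ} {q : ℝ → ℝ} {Mk : ℝ} (H : KD k q Mk) (r j : ℕ) (hrk : r+1 ≤ k) (hj : j ≤ r)
    (w : ℝ) (hw : 1 < w) (hrN : r+1 ≤ ⌊w⌋₊) :
    ∑ n ∈ Finset.range (⌊w⌋₊ - r),
        |(dd ^ (r+1)) (fun n : ℕ => ((n.choose j : ℕ):ℝ) * q ((n:ℝ)*(1/w))) n|
      ≤ 2^(r+1) * Mk := by
  have hk1 := H.hk1
  have hw0 : (0:ℝ) < w := by linarith
  have hh : (0:ℝ) < 1/w := by positivity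
  set N := ⌊w⌋₊ with hN
  set M' := N - r with hM'
  have hNw : ((N:ℕ):ℝ) ≤ w := Nat.floor_le hw0.le
  -- pointwise expansion
  have hpoint : ∀ n ∈ Finset.range M',
      |(dd ^ (r+1)) (fun n : ℕ => ((n.choose j : ℕ):ℝ) * q ((n:ℝ)*(1/w))) n|
        ≤ ∑ i ∈ Finset.range (r+2), ((r+1).choose i : ℝ) *
            ((if i ≤ j then ((n.choose (j-i) : ℕ):ℝ) else 0) *
              |Dif (1/w) (r+1-i) q (((n+i:ℕ):ℝ)*(1/w))|) := by
    intro n _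
    rw [leibniz (r+1) (fun n : ℕ => ((n.choose j : ℕ):ℝ)) (fun n : ℕ => q ((n:ℝ)*(1/w))) n]
    refine le_trans (Finset.abs_sum_le_sum_abs _ _) (le_of_eq ?_)
    refine Finset.sum_congr rfl (fun i _ => ?_)
    rw [ddpow_choose, bridge (1/w) q (r+1-i) (n+i)]
    by_cases hij : i ≤ j
    · rw [if_pos hij]
      rw [abs_mul, abs_mul, abs_mul, abs_pow, abs_neg, abs_one, one_pow, one_mul,
        Nat.abs_cast, Nat.abs_cast]
    · rw [if_neg hij]
      simp
  -- swap and bound each i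
  have hinner : ∀ i ∈ Finset.range (r+2),
      ∑ n ∈ Finset.range M',
          ((if i ≤ j then ((n.choose (j-i) : ℕ):ℝ) else 0) *
            |Dif (1/w) (r+1-i) q (((n+i:ℕ):ℝ)*(1/w))|) ≤ Mk := by
    intro i _
    by_cases hij : i ≤ j
    · simp only [if_pos hij]
      set l := r + 1 - i with hl
      have hl1 : 1 ≤ l := by omega
      have hlk : l ≤ k := by omega
      -- nonnegativity and identification with telescoping differences
      set Hf : ℕ → ℝ := fun n => Dif (1/w) (r-i) q (((n+i:ℕ):ℝ)*(1/w)) with hHf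
      have hidD : ∀ n, n ∈ Finset.range (M'+1) →
          0 ≤ Hf n := by
        intro n hn
        have hn' : n ≤ M' := by have := Finset.mem_range.mp hn; omega
        apply sign_dif H (1/w) hh (r-i) (by omega)
        · positivity
        · have e : (((n+i:ℕ)):ℝ)*(1/w) + ((r-i:ℕ):ℝ)*(1/w) = (((n+i+(r-i):ℕ)):ℝ)*(1/w) := by
            push_cast; ring
          rw [e]
          have hle : n + i + (r-i) ≤ N := by omega
          calc (((n+i+(r-i):ℕ)):ℝ)*(1/w) ≤ ((N:ℕ):ℝ)*(1/w) := by
                apply mul_le_mul_of_nonneg_right _ hh.le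
                exact_mod_cast hle
            _ ≤ 1 := by rw [mul_one_div]; exact (div_le_one hw0).mpr hNw
      have htel : ∀ n ∈ Finset.range M',
          Dif (1/w) l q (((n+i:ℕ):ℝ)*(1/w)) = Hf n - Hf (n+1) := by
        intro n _
        have e1 : l = (r-i)+1 := by omega
        rw [e1, Dif_succ_outer]
        have e2 : (((n+1+i:ℕ)):ℝ)*(1/w) = (((n+i:ℕ)):ℝ)*(1/w) + 1/w := by
          push_cast; ring
        show Dif (1/w) (r-i) q (((n+i:ℕ):ℝ)*(1/w)) - Dif (1/w) (r-i) q (((n+i:ℕ):ℝ)*(1/w) + 1/w)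
          = Hf n - Hf (n+1)
        rw [hHf]
        rw [← e2]
      have hsign : ∀ n ∈ Finset.range M', 0 ≤ Hf n - Hf (n+1) := by
        intro n hn
        rw [← htel n hn]
        have hn' : n < M' := Finset.mem_range.mp hn
        apply sign_dif H (1/w) hh l hlk
        · positivity
        · have e : (((n+i:ℕ)):ℝ)*(1/w) + ((l:ℕ):ℝ)*(1/w) = (((n+i+l:ℕ)):ℝ)*(1/w) := by
            push_cast; ring
          rw [e]
          have hle : n + i + l ≤ N := by omega
          calc (((n+i+l:ℕ)):ℝ)*(1/w) ≤ ((N:ℕ):ℝ)*(1/w) := by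
                apply mul_le_mul_of_nonneg_right _ hh.le
                exact_mod_cast hle
            _ ≤ 1 := by rw [mul_one_div]; exact (div_le_one hw0).mpr hNw
      have hstep1 : ∑ n ∈ Finset.range M',
            (((n.choose (j-i) : ℕ):ℝ) * |Dif (1/w) l q (((n+i:ℕ):ℝ)*(1/w))|)
          ≤ ((N.choose (j-i) : ℕ):ℝ) * (Hf 0 - Hf M') := by
        have e : ∀ n ∈ Finset.range M',
            ((n.choose (j-i) : ℕ):ℝ) * |Dif (1/w) l q (((n+i:ℕ):ℝ)*(1/w))|
              ≤ ((N.choose (j-i) : ℕ):ℝ) * (Hf n - Hf (n+1)) := by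
          intro n hn
          rw [htel n hn] at *
          rw [abs_of_nonneg (hsign n hn)]
          apply mul_le_mul_of_nonneg_right _ (hsign n hn)
          have hnN : n ≤ N := by
            have := Finset.mem_range.mp hn
            omega
          have : n.choose (j-i) ≤ N.choose (j-i) := Nat.choose_mono _ hnN
          exact_mod_cast this
        calc ∑ n ∈ Finset.range M', (((n.choose (j-i) : ℕ):ℝ) * |Dif (1/w) l q (((n+i:ℕ):ℝ)*(1/w))|)
            ≤ ∑ n ∈ Finset.range M', ((N.choose (j-i) : ℕ):ℝ) * (Hf n - Hf (n+1)) :=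
              Finset.sum_le_sum e
          _ = ((N.choose (j-i) : ℕ):ℝ) * ∑ n ∈ Finset.range M', (Hf n - Hf (n+1)) := by
              rw [Finset.mul_sum]
          _ = ((N.choose (j-i) : ℕ):ℝ) * (Hf 0 - Hf M') := by
              rw [Finset.sum_range_sub' Hf M']
      have hHf0 : Hf 0 ≤ (1/w)^(r-i) * Mk := by
        have hx0 : (0:ℝ) ≤ (((0+i:ℕ)):ℝ)*(1/w) := by positivity
        have hxb : (((0+i:ℕ)):ℝ)*(1/w) + ((r-i:ℕ):ℝ)*(1/w) ≤ 1 := by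
          have e : (((0+i:ℕ)):ℝ)*(1/w) + ((r-i:ℕ):ℝ)*(1/w) = (((0+i+(r-i):ℕ)):ℝ)*(1/w) := by
            push_cast; ring
          rw [e]
          have hle : 0 + i + (r-i) ≤ N := by omega
          calc (((0+i+(r-i):ℕ)):ℝ)*(1/w) ≤ ((N:ℕ):ℝ)*(1/w) := by
                apply mul_le_mul_of_nonneg_right _ hh.le
                exact_mod_cast hle
            _ ≤ 1 := by rw [mul_one_div]; exact (div_le_one hw0).mpr hNw
        have hmag := mag_dif H (1/w) hh (r-i) (by omega) ((((0+i:ℕ)):ℝ)*(1/w)) hx0 hxb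
        have hone : (1 - (((0+i:ℕ)):ℝ)*(1/w))^(k-1-(r-i)) ≤ 1 := by
          apply pow_le_one₀
          · have : (((0+i:ℕ)):ℝ)*(1/w) ≤ 1 := by
              have h2 : (0:ℝ) ≤ ((r-i:ℕ):ℝ)*(1/w) := by positivity
              linarith
            linarith
          · have : (0:ℝ) ≤ (((0+i:ℕ)):ℝ)*(1/w) := hx0
            linarith
        calc Hf 0 ≤ |Hf 0| := le_abs_self _
          _ ≤ (1/w)^(r-i) * (1 - (((0+i:ℕ)):ℝ)*(1/w))^(k-1-(r-i)) * Mk := hmag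
          _ ≤ (1/w)^(r-i) * 1 * Mk := by
              apply mul_le_mul_of_nonneg_right _ H.hMk0
              exact mul_le_mul_of_nonneg_left hone (by positivity)
          _ = (1/w)^(r-i) * Mk := by ring
      have hfinal : ((N.choose (j-i) : ℕ):ℝ) * (Hf 0 - Hf M') ≤ Mk := by
        have hHfM : 0 ≤ Hf M' := hidD M' (Finset.self_mem_range_succ M')
        have hCN : ((N.choose (j-i) : ℕ):ℝ) ≤ w^(r-i) := by
          have h1 : N.choose (j-i) ≤ N^(j-i) := Nat.choose_le_pow N (j-i)
          calc ((N.choose (j-i) : ℕ):ℝ) ≤ ((N^(j-i) : ℕ):ℝ) := by exact_mod_cast h1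
            _ ≤ w^(j-i) := by
              push_cast
              exact pow_le_pow_left₀ (by positivity) hNw _
            _ ≤ w^(r-i) := pow_le_pow_right₀ hw.le (by omega)
        have hHf0' : 0 ≤ Hf 0 - Hf M' → Hf 0 - Hf M' ≤ (1/w)^(r-i) * Mk := by
          intro _
          have : (0:ℝ) ≤ (1/w)^(r-i) * Mk → True := fun _ => trivial
          linarith [hHf0, hHfM]
        by_cases hd : 0 ≤ Hf 0 - Hf M'
        · have hq1 : ((N.choose (j-i) : ℕ):ℝ) * (Hf 0 - Hf M') ≤ w^(r-i) * ((1/w)^(r-i) * Mk) :=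
            mul_le_mul hCN (hHf0' hd) hd (by positivity)
          have hq2 : w^(r-i) * ((1/w)^(r-i) * Mk) = Mk := by
            have e : w^(r-i) * ((1/w)^(r-i) * Mk) = (w*(1/w))^(r-i) * Mk := by
              rw [mul_pow]; ring
            rw [e, mul_one_div, div_self (ne_of_gt hw0), one_pow, one_mul]
          linarith
        · push_neg at hd
          have : ((N.choose (j-i) : ℕ):ℝ) * (Hf 0 - Hf M') ≤ 0 := by
            apply mul_nonpos_of_nonneg_of_nonpos (by positivity) (le_of_lt hd)
          linarith [H.hMk0]
      calc ∑ n ∈ Finset.range M',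
            (((n.choose (j-i) : ℕ):ℝ) * |Dif (1/w) l q (((n+i:ℕ):ℝ)*(1/w))|)
          ≤ ((N.choose (j-i) : ℕ):ℝ) * (Hf 0 - Hf M') := hstep1
        _ ≤ Mk := hfinal
    · simp only [if_neg hij, zero_mul]
      simp [H.hMk0]
  calc ∑ n ∈ Finset.range M',
        |(dd ^ (r+1)) (fun n : ℕ => ((n.choose j : ℕ):ℝ) * q ((n:ℝ)*(1/w))) n|
      ≤ ∑ n ∈ Finset.range M', ∑ i ∈ Finset.range (r+2), ((r+1).choose i : ℝ) *
          ((if i ≤ j then ((n.choose (j-i) : ℕ):ℝ) else 0) *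
            |Dif (1/w) (r+1-i) q (((n+i:ℕ):ℝ)*(1/w))|) := Finset.sum_le_sum hpoint
    _ = ∑ i ∈ Finset.range (r+2), ((r+1).choose i : ℝ) * (∑ n ∈ Finset.range M',
          ((if i ≤ j then ((n.choose (j-i) : ℕ):ℝ) else 0) *
            |Dif (1/w) (r+1-i) q (((n+i:ℕ):ℝ)*(1/w))|)) := by
        rw [Finset.sum_comm]
        exact Finset.sum_congr rfl (fun i _ => by rw [Finset.mul_sum])
    _ ≤ ∑ i ∈ Finset.range (r+2), ((r+1).choose i : ℝ) * Mk := by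
        apply Finset.sum_le_sum
        intro i hi
        apply mul_le_mul_of_nonneg_left _ (by positivity)
        by_cases hij : i ≤ j
        · have := hinner i hi
          simpa [hij] using this
        · have := hinner i hi
          simpa [hij] using this
    _ = (∑ i ∈ Finset.range (r+2), ((r+1).choose i : ℝ)) * Mk := by rw [← Finset.sum_mul]
    _ = 2^(r+1) * Mk := by
        have := Nat.sum_range_choose (r+1)
        have e : (∑ i ∈ Finset.range (r+2), ((r+1).choose i : ℝ)) = ((2^(r+1) : ℕ):ℝ) := by
          rw [← Nat.cast_sum]
          exact_mod_cast congrArg (fun z : ℕ => (z:ℝ)) this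
        rw [e]
        push_cast
        ring

lemma qbound {k : ℕ} {q : ℝ → ℝ} {Mk : ℝ} (H : KD k q Mk) :
    ∀ s ∈ Icc (0:ℝ) 1, |q s| ≤ Mk := by
  intro s hs
  have hk1 := H.hk1
  obtain ⟨hlo, hhi⟩ := decay H (k-1) 0 (by omega) s hs
  simp only [pow_zero, one_mul, Function.iterate_zero_apply] at hlo hhi
  rw [abs_of_nonneg hlo]
  calc q s ≤ (1-s)^(k-1) * Mk := hhi
    _ ≤ 1 * Mk := by
        apply mul_le_mul_of_nonneg_right _ H.hMk0
        apply pow_le_one₀ (by linarith [hs.2]) (by linarith [hs.1])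
    _ = Mk := one_mul Mk

lemma claim {k : ℕ} {q : ℝ → ℝ} {Mk : ℝ} (H : KD k q Mk) (r : ℕ) (hrk : r+1 ≤ k)
    (a : ℕ → ℝ) (ha : ∀ n : ℕ, ((n:ℝ))^r = ∑ j ∈ Finset.range (r+1), a j * ((n.choose j : ℕ):ℝ)) :
    ∀ d m : ℕ, m + d = r+1 → ∃ C : ℝ, 0 ≤ C ∧ ∀ w : ℝ, 1 < w → m ≤ ⌊w⌋₊ →
      |∑ n ∈ Finset.range (⌊w⌋₊ - m + 1), (-1:ℝ)^n *
          ((dd ^ m) (fun n : ℕ => ((n:ℝ))^r * q ((n:ℝ)*(1/w))) n)| ≤ C := by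
  have hk1 := H.hk1
  have hA0 : 0 ≤ ∑ j ∈ Finset.range (r+1), |a j| :=
    Finset.sum_nonneg (fun j _ => abs_nonneg _)
  -- decomposition of the power function over the binomial basis
  have hFdec : ∀ (w : ℝ) (m' n : ℕ),
      (dd ^ m') (fun n : ℕ => ((n:ℝ))^r * q ((n:ℝ)*(1/w))) n
        = ∑ j ∈ Finset.range (r+1),
            a j * (dd ^ m') (fun n : ℕ => ((n.choose j : ℕ):ℝ) * q ((n:ℝ)*(1/w))) n := by
    intro w m' n
    have e : (fun n : ℕ => ((n:ℝ))^r * q ((n:ℝ)*(1/w)))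
        = fun n : ℕ => ∑ j ∈ Finset.range (r+1), a j * (((n.choose j : ℕ):ℝ) * q ((n:ℝ)*(1/w))) := by
      funext x
      rw [ha x, Finset.sum_mul]
      exact Finset.sum_congr rfl (fun j _ => by ring)
    rw [e]
    exact ddpow_finsum m' _ a _ n
  -- crude bound at 0
  have hB1 : ∀ m', m' ≤ k → ∀ w : ℝ, 1 < w → m' ≤ ⌊w⌋₊ →
      |(dd ^ m') (fun n : ℕ => ((n:ℝ))^r * q ((n:ℝ)*(1/w))) 0| ≤ 2^k * ((k:ℝ))^r * Mk := by
    intro m' hm' w hw hm'N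
    have hw0 : (0:ℝ) < w := by linarith
    have hNw : ((⌊w⌋₊:ℕ):ℝ) ≤ w := Nat.floor_le hw0.le
    have hBl : ∀ l, l ≤ m' → |(fun n : ℕ => ((n:ℝ))^r * q ((n:ℝ)*(1/w))) (0+l)| ≤ ((k:ℝ))^r * Mk := by
      intro l hl
      have hlN : l ≤ ⌊w⌋₊ := le_trans hl hm'N
      have hlw : ((l:ℕ):ℝ)*(1/w) ∈ Icc (0:ℝ) 1 := by
        constructor
        · positivity
        · rw [mul_one_div]
          apply (div_le_one hw0).mpr
          calc ((l:ℕ):ℝ) ≤ ((⌊w⌋₊:ℕ):ℝ) := by exact_mod_cast hlN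
            _ ≤ w := hNw
      simp only [Nat.zero_add]
      rw [abs_mul]
      have h1 : |((l:ℕ):ℝ)^r| ≤ ((k:ℝ))^r := by
        rw [abs_pow, Nat.abs_cast]
        apply pow_le_pow_left₀ (by positivity)
        exact_mod_cast le_trans hl hm'
      have h2 : |q (((l:ℕ):ℝ)*(1/w))| ≤ Mk := qbound H _ hlw
      exact mul_le_mul h1 h2 (abs_nonneg _) (by positivity)
    calc |(dd ^ m') (fun n : ℕ => ((n:ℝ))^r * q ((n:ℝ)*(1/w))) 0|
        ≤ 2^m' * (((k:ℝ))^r * Mk) := ddpow_bound m' _ 0 _ hBl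
      _ ≤ 2^k * (((k:ℝ))^r * Mk) := by
          apply mul_le_mul_of_nonneg_right _ (mul_nonneg (by positivity) H.hMk0)
          apply pow_le_pow_right₀ (by norm_num) hm'
      _ = 2^k * ((k:ℝ))^r * Mk := by ring
  intro d
  induction d with
  | zero =>
    intro m hm
    have hm' : m = r+1 := by omega
    subst hm'
    refine ⟨(∑ j ∈ Finset.range (r+1), |a j|) * (2^(r+1) * Mk),
      mul_nonneg hA0 (mul_nonneg (by positivity) H.hMk0), ?_⟩
    intro w hw hmN
    have e1 : ⌊w⌋₊ - (r+1) + 1 = ⌊w⌋₊ - r := by omega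
    rw [e1]
    calc |∑ n ∈ Finset.range (⌊w⌋₊ - r), (-1:ℝ)^n *
            ((dd ^ (r+1)) (fun n : ℕ => ((n:ℝ))^r * q ((n:ℝ)*(1/w))) n)|
        ≤ ∑ n ∈ Finset.range (⌊w⌋₊ - r), |(-1:ℝ)^n *
            ((dd ^ (r+1)) (fun n : ℕ => ((n:ℝ))^r * q ((n:ℝ)*(1/w))) n)| :=
          Finset.abs_sum_le_sum_abs _ _
      _ = ∑ n ∈ Finset.range (⌊w⌋₊ - r),
            |(dd ^ (r+1)) (fun n : ℕ => ((n:ℝ))^r * q ((n:ℝ)*(1/w))) n| := by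
          refine Finset.sum_congr rfl (fun n _ => ?_)
          rw [abs_mul, abs_pow, abs_neg, abs_one, one_pow, one_mul]
      _ ≤ ∑ n ∈ Finset.range (⌊w⌋₊ - r), ∑ j ∈ Finset.range (r+1),
            |a j| * |(dd ^ (r+1)) (fun n : ℕ => ((n.choose j : ℕ):ℝ) * q ((n:ℝ)*(1/w))) n| := by
          apply Finset.sum_le_sum
          intro n _
          rw [hFdec w (r+1) n]
          refine le_trans (Finset.abs_sum_le_sum_abs _ _) (le_of_eq ?_)
          exact Finset.sum_congr rfl (fun j _ => abs_mul _ _)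
      _ = ∑ j ∈ Finset.range (r+1), |a j| * ∑ n ∈ Finset.range (⌊w⌋₊ - r),
            |(dd ^ (r+1)) (fun n : ℕ => ((n.choose j : ℕ):ℝ) * q ((n:ℝ)*(1/w))) n| := by
          rw [Finset.sum_comm]
          exact Finset.sum_congr rfl (fun j _ => by rw [Finset.mul_sum])
      _ ≤ ∑ j ∈ Finset.range (r+1), |a j| * (2^(r+1) * Mk) := by
          apply Finset.sum_le_sum
          intro j hj
          apply mul_le_mul_of_nonneg_left _ (abs_nonneg _)
          exact B3 H r j hrk (by
            have := Finset.mem_range.mp hj; omega) w hw hmN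
      _ = (∑ j ∈ Finset.range (r+1), |a j|) * (2^(r+1) * Mk) := by
          rw [← Finset.sum_mul]
  | succ d ihd =>
    intro m hm
    obtain ⟨C1, hC10, hC1⟩ := ihd (m+1) (by omega)
    have hmr : m ≤ r := by omega
    have hmk1 : m ≤ k - 1 := by omega
    refine ⟨2^k * ((k:ℝ))^r * Mk +
      ((∑ j ∈ Finset.range (r+1), |a j|) * (2^k * ((k:ℝ)+1)^k * Mk) + C1), ?_, ?_⟩
    · have h1 : (0:ℝ) ≤ 2^k * ((k:ℝ))^r * Mk :=
        mul_nonneg (mul_nonneg (by positivity) (by positivity)) H.hMk0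
      have h2 : (0:ℝ) ≤ (∑ j ∈ Finset.range (r+1), |a j|) * (2^k * ((k:ℝ)+1)^k * Mk) :=
        mul_nonneg hA0 (mul_nonneg (mul_nonneg (by positivity) (by positivity)) H.hMk0)
      linarith
    intro w hw hmN
    have h2' : (0:ℝ) ≤ (∑ j ∈ Finset.range (r+1), |a j|) * (2^k * ((k:ℝ)+1)^k * Mk) :=
      mul_nonneg hA0 (mul_nonneg (mul_nonneg (by positivity) (by positivity)) H.hMk0)
    by_cases hNm : ⌊w⌋₊ = m
    · have e1 : ⌊w⌋₊ - m + 1 = 1 := by omega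
      rw [e1, Finset.sum_range_one]
      have e2 : |(-1:ℝ)^0 * ((dd ^ m) (fun n : ℕ => ((n:ℝ))^r * q ((n:ℝ)*(1/w))) 0)|
          = |(dd ^ m) (fun n : ℕ => ((n:ℝ))^r * q ((n:ℝ)*(1/w))) 0| := by
        rw [pow_zero, one_mul]
      rw [e2]
      have := hB1 m (by omega) w hw hmN
      linarith
    · have hm1N : m + 1 ≤ ⌊w⌋₊ := by omega
      rw [abel_step ((dd ^ m) (fun n : ℕ => ((n:ℝ))^r * q ((n:ℝ)*(1/w)))) (⌊w⌋₊ - m)]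
      have hdd : ∀ n, dd ((dd ^ m) (fun n : ℕ => ((n:ℝ))^r * q ((n:ℝ)*(1/w)))) n
          = (dd ^ (m+1)) (fun n : ℕ => ((n:ℝ))^r * q ((n:ℝ)*(1/w))) n := by
        intro n
        rw [ddpow_succ']
      have hS : |∑ n ∈ Finset.range (⌊w⌋₊ - m), (-1:ℝ)^n *
          (dd ((dd ^ m) (fun n : ℕ => ((n:ℝ))^r * q ((n:ℝ)*(1/w)))) n)| ≤ C1 := by
        have h := hC1 w hw hm1N
        have e2 : ⌊w⌋₊ - (m+1) + 1 = ⌊w⌋₊ - m := by omega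
        rw [e2] at h
        calc |∑ n ∈ Finset.range (⌊w⌋₊ - m), (-1:ℝ)^n *
              (dd ((dd ^ m) (fun n : ℕ => ((n:ℝ))^r * q ((n:ℝ)*(1/w)))) n)|
            = |∑ n ∈ Finset.range (⌊w⌋₊ - m), (-1:ℝ)^n *
              ((dd ^ (m+1)) (fun n : ℕ => ((n:ℝ))^r * q ((n:ℝ)*(1/w))) n)| := by
              congr 1
              exact Finset.sum_congr rfl (fun n _ => by rw [hdd n])
          _ ≤ C1 := h
      have h0 : |(dd ^ m) (fun n : ℕ => ((n:ℝ))^r * q ((n:ℝ)*(1/w))) 0| ≤ 2^k * ((k:ℝ))^r * Mk :=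
        hB1 m (by omega) w hw hmN
      have hNb : |(dd ^ m) (fun n : ℕ => ((n:ℝ))^r * q ((n:ℝ)*(1/w))) (⌊w⌋₊ - m)|
          ≤ (∑ j ∈ Finset.range (r+1), |a j|) * (2^k * ((k:ℝ)+1)^k * Mk) := by
        rw [hFdec w m (⌊w⌋₊ - m)]
        calc |∑ j ∈ Finset.range (r+1),
              a j * (dd ^ m) (fun n : ℕ => ((n.choose j : ℕ):ℝ) * q ((n:ℝ)*(1/w))) (⌊w⌋₊ - m)|
            ≤ ∑ j ∈ Finset.range (r+1),
              |a j * (dd ^ m) (fun n : ℕ => ((n.choose j : ℕ):ℝ) * q ((n:ℝ)*(1/w))) (⌊w⌋₊ - m)| :=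
              Finset.abs_sum_le_sum_abs _ _
          _ ≤ ∑ j ∈ Finset.range (r+1), |a j| * (2^k * ((k:ℝ)+1)^k * Mk) := by
              apply Finset.sum_le_sum
              intro j hj
              rw [abs_mul]
              apply mul_le_mul_of_nonneg_left _ (abs_nonneg _)
              exact B2 H j m (by
                have := Finset.mem_range.mp hj; omega) hmk1 w hw hmN
          _ = (∑ j ∈ Finset.range (r+1), |a j|) * (2^k * ((k:ℝ)+1)^k * Mk) := by
              rw [← Finset.sum_mul]
      set f0 : ℝ := (dd ^ m) (fun n : ℕ => ((n:ℝ))^r * q ((n:ℝ)*(1/w))) 0 with hf0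
      set fN : ℝ := (dd ^ m) (fun n : ℕ => ((n:ℝ))^r * q ((n:ℝ)*(1/w))) (⌊w⌋₊ - m) with hfN
      set S : ℝ := ∑ n ∈ Finset.range (⌊w⌋₊ - m), (-1:ℝ)^n *
          (dd ((dd ^ m) (fun n : ℕ => ((n:ℝ))^r * q ((n:ℝ)*(1/w)))) n) with hSS
      have habs1 : |(-1:ℝ)^(⌊w⌋₊ - m) * fN| = |fN| := by
        rw [abs_mul, abs_pow, abs_neg, abs_one, one_pow, one_mul]
      have t1 : |(f0 + (-1:ℝ)^(⌊w⌋₊ - m) * fN)/2 + (1/2) * S|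
          ≤ (|f0| + |fN|)/2 + (1/2)*|S| := by
        calc |(f0 + (-1:ℝ)^(⌊w⌋₊ - m) * fN)/2 + (1/2) * S|
            ≤ |(f0 + (-1:ℝ)^(⌊w⌋₊ - m) * fN)/2| + |(1/2) * S| := abs_add_le _ _
          _ = |f0 + (-1:ℝ)^(⌊w⌋₊ - m) * fN|/2 + (1/2)*|S| := by
              rw [abs_div, abs_mul]
              norm_num
          _ ≤ (|f0| + |fN|)/2 + (1/2)*|S| := by
              have h3 := abs_add_le f0 ((-1:ℝ)^(⌊w⌋₊ - m) * fN)
              rw [habs1] at h3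
              linarith
      calc |(f0 + (-1:ℝ)^(⌊w⌋₊ - m) * fN)/2 + (1/2) * S|
          ≤ (|f0| + |fN|)/2 + (1/2)*|S| := t1
        _ ≤ 2^k * ((k:ℝ))^r * Mk +
            ((∑ j ∈ Finset.range (r+1), |a j|) * (2^k * ((k:ℝ)+1)^k * Mk) + C1) := by
            have hnn : (0:ℝ) ≤ 2^k * ((k:ℝ))^r * Mk :=
              mul_nonneg (mul_nonneg (by positivity) (by positivity)) H.hMk0
            have := abs_nonneg S
            linarith [h0, hNb, hS]

end Stmt7Aux

/-- Lemma 8: for `α ≥ 1` and `r = 0,1,…,k-1`, `Σ_{n ≤ w} (-1)^n n^r q_α(n/w) = O(1)`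
uniformly in `w > 1`. -/
theorem stmt_7 (α : ℝ) (hα : 1 ≤ α) (q : ℝ → ℝ) (hq : NevanlinnaKernel α q) :
    ∀ r : ℕ, r < ⌊α⌋₊ → ∃ C : ℝ, ∀ w : ℝ, 1 < w →
      |∑ n ∈ Finset.range (⌊w⌋₊ + 1), (-1:ℝ)^n * (n:ℝ)^r * q ((n:ℝ)/w)| ≤ C := by
  intro r hr
  set k := ⌊α⌋₊ with hkdef
  have hk1 : 1 ≤ k := Nat.le_floor (by exact_mod_cast hα)
  have hcont : ContinuousOn (deriv^[k-1] q) (Set.Icc 0 1) := by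
    have := hq.contDeriv (k-1) (by omega)
    rwa [iteratedDeriv_eq_iterate] at this
  obtain ⟨Cb, hCb⟩ := (isCompact_Icc : IsCompact (Set.Icc (0:ℝ) 1)).exists_bound_of_continuousOn hcont
  set Mk := max Cb 0 with hMkdef
  have H : Stmt7Aux.KD k q Mk := by
    refine ⟨hk1, hq.nonneg, ?_, ?_, ?_, ?_, le_max_right Cb 0, ?_⟩
    · intro j hj
      have := hq.contDeriv j hj
      rwa [iteratedDeriv_eq_iterate] at this
    · intro j hj t ht
      have := hq.smooth j hj t ht
      rwa [iteratedDeriv_eq_iterate] at this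
    · intro j hj
      have := hq.deriv_one j hj
      rwa [iteratedDeriv_eq_iterate] at this
    · intro t ht
      have := hq.derivk_nonneg t ht
      rwa [iteratedDeriv_eq_iterate] at this
    · intro s hs
      have := hCb s hs
      calc |deriv^[k-1] q s| ≤ Cb := this
        _ ≤ Mk := le_max_left Cb 0
  obtain ⟨a, ha⟩ := Stmt7Aux.exists_choose_basis r
  obtain ⟨C, _, hC⟩ := Stmt7Aux.claim H r (by omega) a ha (r+1) 0 (by omega)
  refine ⟨C, fun w hw => ?_⟩
  have h := hC w hw (Nat.zero_le _)
  have e0 : ⌊w⌋₊ - 0 + 1 = ⌊w⌋₊ + 1 := by omega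
  rw [e0] at h
  have e2 : (∑ n ∈ Finset.range (⌊w⌋₊+1), (-1:ℝ)^n * (n:ℝ)^r * q ((n:ℝ)/w))
      = ∑ n ∈ Finset.range (⌊w⌋₊+1), (-1:ℝ)^n *
          ((Stmt7Aux.dd ^ 0 : (ℕ → ℝ) →ₗ[ℝ] (ℕ → ℝ)) (fun n : ℕ => ((n:ℝ))^r * q ((n:ℝ)*(1/w))) n) := by
    refine Finset.sum_congr rfl (fun n _ => ?_)
    have e1 : ((Stmt7Aux.dd ^ 0 : (ℕ → ℝ) →ₗ[ℝ] (ℕ → ℝ)) (fun n : ℕ => ((n:ℝ))^r * q ((n:ℝ)*(1/w))) n)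
        = ((n:ℝ))^r * q ((n:ℝ)*(1/w)) := by
      rw [pow_zero]; rfl
    rw [e1, mul_one_div]
    ring
  rw [e2]
  exact h
end
end
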